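/- arXiv:1412.2246 — 8 statements merged into one kernel-verified Lean document; each statement's English description precedes it below -/
import Mathlib

section
/- Let (K,|·|) be a complete ultrametric field, E a finite-dimensional K-vector space, and α : E → E a K-linear map. For each ρ ∈ R(α), the subspace (E_K̄)_ρ of E ⊗_K K̄ is defined over K, i.e. (E_K̄)_ρ = E_ρ ⊗_K K̄ where E_ρ := (E_K̄)_ρ ∩ E (identifying E with E ⊗ 1). Consequently E = ⊕_{ρ ∈ R(α)} E_ρ, and each E_ρ is an α-invariant vector subspace of E. -/
open scoped TensorProduct

/-- `(E_K̄)_ρ`: the sum of the generalized eigenspaces of `α ⊗ id` on `K̄ ⊗ E`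
for the eigenvalues `μ ∈ K̄` with `v μ = ρ`. -/
noncomputable def genEigSum {K : Type*} [NontriviallyNormedField K]
    {E : Type*} [AddCommGroup E] [Module K E] (α : E →ₗ[K] E)
    (Kbar : Type*) [Field Kbar] [Algebra K Kbar]
    (v : AbsoluteValue Kbar ℝ) (ρ : ℝ) : Submodule Kbar (Kbar ⊗[K] E) :=
  ⨆ (μ : Kbar) (_ : v μ = ρ), Module.End.maxGenEigenspace (α.baseChange Kbar) μ

/-- `E_ρ := (E_K̄)_ρ ∩ E`, identifying `E` with `E ⊗ 1 ⊆ K̄ ⊗ E`. -/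
noncomputable def eRho {K : Type*} [NontriviallyNormedField K]
    {E : Type*} [AddCommGroup E] [Module K E] (α : E →ₗ[K] E)
    (Kbar : Type*) [Field Kbar] [Algebra K Kbar]
    (v : AbsoluteValue Kbar ℝ) (ρ : ℝ) : Submodule K E :=
  ((genEigSum α Kbar v ρ).restrictScalars K).comap (TensorProduct.mk K Kbar E 1)

/-- `R(α)`: the set of absolute values of the eigenvalues of `α ⊗ id` in `K̄`. -/
def rSet {K : Type*} [NontriviallyNormedField K]
    {E : Type*} [AddCommGroup E] [Module K E] (α : E →ₗ[K] E)
    (Kbar : Type*) [Field Kbar] [Algebra K Kbar]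
    (v : AbsoluteValue Kbar ℝ) : Set ℝ :=
  {r | ∃ μ : Kbar, Module.End.HasEigenvalue (α.baseChange Kbar) μ ∧ v μ = r}

/-!
Over a complete ultrametric field `K`, every absolute value on `K̄` extending `‖·‖` is the
spectral norm, so all roots of a monic irreducible `p ∈ K[X]` have the same absolute value,
`spectralValue p`. Grouping the irreducible factors of the characteristic polynomial `χ` of `α`
by this value writes `χ = ∏ ρ, q ρ` with pairwise coprime `q ρ ∈ K[X]`, hence
`E = ⨁ ρ, ker (q ρ)(α)`. After base change, `ker (q ρ)(α ⊗ 1) = K̄ ⊗ ker (q ρ)(α)` (flatness) lies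
in `(E_K̄)_ρ`; as the `(E_K̄)_ρ` are independent and these kernels already span, they coincide.
-/

open Polynomial UniqueFactorizationMonoid
open scoped Function

namespace Polynomial

variable {R M : Type*} [CommRing R] [AddCommGroup M] [Module R M]

theorem ker_aeval_prod_eq_iSup_ker (f : Module.End R M) {ι : Type*} (s : Finset ι) (q : ι → R[X])
    (hq : (s : Set ι).Pairwise (IsCoprime on q)) :
    LinearMap.ker (aeval f (∏ i ∈ s, q i)) = ⨆ i ∈ s, LinearMap.ker (aeval f (q i)) := by
  classical
  induction s using Finset.induction_on with
  | empty => simp [Module.End.one_eq_id]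
  | insert a s ha ih =>
    have hcop : IsCoprime (q a) (∏ i ∈ s, q i) :=
      IsCoprime.prod_right fun i hi ↦ hq (by simp) (by simp [hi]) (by rintro rfl; exact ha hi)
    rw [Finset.prod_insert ha, ← sup_ker_aeval_eq_ker_aeval_mul_of_coprime f hcop,
      ih (hq.mono (by simp)), Finset.iSup_insert]

theorem iSup_ker_aeval_eq_top (f : Module.End R M) {ι : Type*} (s : Finset ι) (q : ι → R[X])
    (hq : (s : Set ι).Pairwise (IsCoprime on q)) (h : aeval f (∏ i ∈ s, q i) = 0) :
    ⨆ i ∈ s, LinearMap.ker (aeval f (q i)) = ⊤ := by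
  rw [← ker_aeval_prod_eq_iSup_ker f s q hq, h, LinearMap.ker_zero]

theorem apply_mem_ker_aeval (f : Module.End R M) (q : R[X]) {x : M}
    (hx : x ∈ LinearMap.ker (aeval f q)) : f x ∈ LinearMap.ker (aeval f q) := by
  have hcomm : aeval f q * f = f * aeval f q := by
    simpa only [map_mul, aeval_X] using congrArg (aeval f) (mul_comm q X)
  rw [LinearMap.mem_ker] at hx ⊢
  rw [← Module.End.mul_apply, hcomm, Module.End.mul_apply, hx, map_zero]

theorem aeval_baseChange_map {A : Type*} [CommRing A] [Algebra R A] (f : Module.End R M)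
    (q : R[X]) : aeval (f.baseChange A) (q.map (algebraMap R A)) = (aeval f q).baseChange A := by
  rw [aeval_map_algebraMap]
  exact aeval_algHom_apply (Module.End.baseChangeHom R A M) f q

theorem monic_of_mem_normalizedFactors {F : Type*} [Field F] [DecidableEq F] {χ p : F[X]}
    (hp : p ∈ normalizedFactors χ) : p.Monic :=
  normalize_normalized_factor p hp ▸ monic_normalize (ne_zero_of_mem_normalizedFactors hp)

end Polynomial

theorem Module.End.ker_aeval_le_iSup_maxGenEigenspace {L V : Type*} [Field L] [AddCommGroup V]
    [Module L V] (f : Module.End L V) {p : L[X]} (hp : p.Monic) (hs : p.Splits) :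
    LinearMap.ker (aeval f p) ≤ ⨆ μ ∈ p.roots, f.maxGenEigenspace μ := by
  classical
  conv_lhs => rw [hs.eq_prod_roots_of_monic hp, Finset.prod_multiset_map_count,
    ker_aeval_prod_eq_iSup_ker f _ _ fun μ _ ν _ hne ↦
      (isCoprime_X_sub_C_of_isUnit_sub (sub_ne_zero.2 hne).isUnit).pow]
  refine iSup₂_le fun μ hμ ↦ le_trans ?_ (le_biSup _ (Multiset.mem_toFinset.1 hμ))
  rw [map_pow, map_sub, aeval_X, aeval_C, Module.algebraMap_end_eq_smul_id,
    ← Module.End.one_eq_id, ← Module.End.genEigenspace_nat]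
  exact Module.End.genEigenspace_le_maximal _ _ _

theorem iSupIndep.iSup_fiber {α ι κ : Type*} [CompleteLattice α] [IsModularLattice α]
    [IsCompactlyGenerated α] {t : ι → α} (ht : iSupIndep t) (g : ι → κ) :
    iSupIndep fun k ↦ ⨆ (i) (_ : g i = k), t i := by
  intro k
  have hrest : (⨆ (l) (_ : l ≠ k), ⨆ (i) (_ : g i = l), t i) = ⨆ i ∈ {i | g i ≠ k}, t i :=
    le_antisymm (iSup₂_le fun l hl ↦ iSup₂_le fun i hi ↦ le_biSup t (hi ▸ hl : g i ≠ k))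
      (iSup₂_le fun i hi ↦ le_iSup₂_of_le (g i) hi (le_iSup₂_of_le i rfl le_rfl))
  rw [hrest]
  exact ht.disjoint_biSup_biSup (s := {i | g i = k}) (Set.disjoint_left.2 fun i h h' ↦ h' h)

theorem iSupIndep.comap_restrictScalars {ι R S M N : Type*} [Ring R] [Ring S]
    [AddCommGroup M] [AddCommGroup N] [Module R M] [Module R N] [Module S N] [SMul R S]
    [IsScalarTower R S N] {p : ι → Submodule S N} (hp : iSupIndep p) {f : M →ₗ[R] N}
    (hf : Function.Injective f) : iSupIndep fun i ↦ ((p i).restrictScalars R).comap f := by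
  rw [iSupIndep_iff_finsetSum_eq_zero_imp_eq_zero] at hp ⊢
  intro s w hw hsum i hi
  apply hf
  rw [map_zero]
  exact hp s (f ∘ w) hw (by rw [← map_zero f, ← hsum, map_sum]; rfl) i hi

theorem LinearMap.ker_baseChange {R A M N : Type*} [CommRing R] [CommRing A] [Algebra R A]
    [Module.Flat R A] [AddCommGroup M] [Module R M] [AddCommGroup N] [Module R N]
    (u : M →ₗ[R] N) : LinearMap.ker (u.baseChange A) = (LinearMap.ker u).baseChange A :=
  Module.Flat.ker_lTensor_eq A A u

theorem Submodule.comap_mk_baseChange {K A E : Type*} [Field K] [CommRing A] [Nontrivial A]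
    [Algebra K A] [AddCommGroup E] [Module K E] (P : Submodule K E) :
    ((P.baseChange A).restrictScalars K).comap (TensorProduct.mk K A E 1) = P := by
  ext x
  rw [← P.ker_mkQ, ← LinearMap.ker_baseChange]
  simp only [Submodule.mem_comap, Submodule.restrictScalars_mem, LinearMap.mem_ker,
    TensorProduct.mk_apply, LinearMap.baseChange_tmul]
  rw [← map_zero (TensorProduct.mk K A (E ⧸ P) 1)]
  exact (Module.Flat.tensorProduct_mk_injective K (E ⧸ P) A).eq_iff

section SpectralPart

open scoped Classical

variable {K : Type*} [NontriviallyNormedField K]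

theorem AbsoluteValue.eq_spectralValue_of_aeval_eq_zero [IsUltrametricDist K] [CompleteSpace K]
    {L : Type*} [Field L] [Algebra K L] [Algebra.IsAlgebraic K L] {v : AbsoluteValue L ℝ}
    (hv : ∀ x : K, v (algebraMap K L x) = ‖x‖) {p : K[X]} (hp : Irreducible p) (hm : p.Monic)
    {μ : L} (hμ : aeval μ p = 0) : v μ = spectralValue p := by
  rw [spectralNorm_unique_field_norm_ext hv, spectralNorm,
    minpoly.eq_of_irreducible_of_monic hp hμ hm]

noncomputable def spectralValues (χ : K[X]) : Finset ℝ :=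
  (normalizedFactors χ).toFinset.image spectralValue

/-- By `AbsoluteValue.eq_spectralValue_of_aeval_eq_zero`, the roots of `spectralPart χ ρ` in an
algebraic extension are the roots of `χ` of absolute value `ρ`, with their multiplicities. -/
noncomputable def spectralPart (χ : K[X]) (ρ : ℝ) : K[X] :=
  ∏ p ∈ (normalizedFactors χ).toFinset with spectralValue p = ρ, p ^ (normalizedFactors χ).count p

theorem spectralPart_monic (χ : K[X]) (ρ : ℝ) : (spectralPart χ ρ).Monic :=
  monic_prod_of_monic _ _ fun _ hp ↦
    (monic_of_mem_normalizedFactors (Multiset.mem_toFinset.1 (Finset.mem_filter.1 hp).1)).pow _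

theorem spectralPart_isCoprime (χ : K[X]) {ρ σ : ℝ} (h : ρ ≠ σ) :
    IsCoprime (spectralPart χ ρ) (spectralPart χ σ) := by
  refine IsCoprime.prod_left fun p hp ↦ IsCoprime.prod_right fun p' hp' ↦ IsCoprime.pow ?_
  simp only [Finset.mem_filter, Multiset.mem_toFinset] at hp hp'
  refine (Irreducible.coprime_iff_not_dvd (irreducible_of_normalized_factor p hp.1)).2 fun hdvd ↦ ?_
  exact h (hp.2.symm.trans (normalizedFactors_eq_of_dvd χ p hp.1 p' hp'.1 hdvd ▸ hp'.2))

theorem prod_spectralPart {χ : K[X]} (hχ : χ.Monic) :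
    ∏ ρ ∈ spectralValues χ, spectralPart χ ρ = χ := by
  simp only [spectralValues, spectralPart]
  rw [Finset.prod_fiberwise_of_maps_to (fun p hp ↦ Finset.mem_image_of_mem _ hp),
    ← Finset.prod_multiset_count]
  simpa [hχ.leadingCoeff] using leadingCoeff_mul_prod_normalizedFactors χ

theorem eq_of_aeval_spectralPart_eq_zero [IsUltrametricDist K] [CompleteSpace K]
    {L : Type*} [Field L] [Algebra K L] [Algebra.IsAlgebraic K L] {v : AbsoluteValue L ℝ}
    (hv : ∀ x : K, v (algebraMap K L x) = ‖x‖) (χ : K[X]) {ρ : ℝ} {μ : L}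
    (hμ : aeval μ (spectralPart χ ρ) = 0) : v μ = ρ := by
  rw [spectralPart, map_prod, Finset.prod_eq_zero_iff] at hμ
  obtain ⟨p, hp, hμp⟩ := hμ
  simp only [Finset.mem_filter, Multiset.mem_toFinset] at hp
  rw [v.eq_spectralValue_of_aeval_eq_zero hv (irreducible_of_normalized_factor p hp.1)
    (monic_of_mem_normalizedFactors hp.1)
    (pow_eq_zero_iff'.1 ((map_pow (aeval μ) p _).symm.trans hμp)).1, hp.2]

theorem exists_aeval_eq_zero_of_mem_spectralValues [IsUltrametricDist K] [CompleteSpace K]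
    {L : Type*} [Field L] [Algebra K L] [IsAlgClosed L] [Algebra.IsAlgebraic K L]
    {v : AbsoluteValue L ℝ} (hv : ∀ x : K, v (algebraMap K L x) = ‖x‖) {χ : K[X]} {ρ : ℝ}
    (hρ : ρ ∈ spectralValues χ) : ∃ μ : L, aeval μ χ = 0 ∧ v μ = ρ := by
  simp only [spectralValues, Finset.mem_image, Multiset.mem_toFinset] at hρ
  obtain ⟨p, hp, rfl⟩ := hρ
  have hirr := irreducible_of_normalized_factor p hp
  obtain ⟨μ, hμ⟩ := IsAlgClosed.exists_aeval_eq_zero L p (degree_pos_of_irreducible hirr).ne'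
  exact ⟨μ, aeval_eq_zero_of_dvd_aeval_eq_zero (dvd_of_mem_normalizedFactors hp) hμ,
    v.eq_spectralValue_of_aeval_eq_zero hv hirr (monic_of_mem_normalizedFactors hp) hμ⟩

end SpectralPart

section GenEigSum

variable {K : Type*} [NontriviallyNormedField K] {E : Type*} [AddCommGroup E] [Module K E]
  (α : E →ₗ[K] E) {Kbar : Type*} [Field Kbar] [Algebra K Kbar] (v : AbsoluteValue Kbar ℝ)

theorem iSupIndep_genEigSum : iSupIndep (genEigSum α Kbar v) :=
  (Module.End.independent_maxGenEigenspace _).iSup_fiber v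

variable [IsUltrametricDist K] [CompleteSpace K] [IsAlgClosure K Kbar]
  {v} (hv : ∀ x : K, v (algebraMap K Kbar x) = ‖x‖)
include hv

theorem ker_aeval_spectralPart_le_genEigSum (χ : K[X]) (ρ : ℝ) :
    LinearMap.ker (aeval (α.baseChange Kbar) ((spectralPart χ ρ).map (algebraMap K Kbar))) ≤
      genEigSum α Kbar v ρ := by
  have := IsAlgClosure.isAlgClosed K (K := Kbar)
  refine ((Module.End.ker_aeval_le_iSup_maxGenEigenspace _ ((spectralPart_monic χ ρ).map _)
    (IsAlgClosed.splits _)).trans (iSup₂_le fun μ hμ ↦ le_iSup₂_of_le μ ?_ le_rfl))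
  rw [mem_roots_map_of_injective (algebraMap K Kbar).injective (spectralPart_monic χ ρ).ne_zero,
    ← aeval_def] at hμ
  exact eq_of_aeval_spectralPart_eq_zero hv χ hμ

theorem genEigSum_eq_baseChange_ker [FiniteDimensional K E] (ρ : ℝ) :
    genEigSum α Kbar v ρ =
      (LinearMap.ker (aeval α (spectralPart (LinearMap.charpoly α) ρ))).baseChange Kbar := by
  let N (σ : ℝ) := LinearMap.ker (aeval (α.baseChange Kbar)
    ((spectralPart (LinearMap.charpoly α) σ).map (algebraMap K Kbar)))
  have hN (σ : ℝ) : N σ =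
      (LinearMap.ker (aeval α (spectralPart (LinearMap.charpoly α) σ))).baseChange Kbar := by
    simp only [N]
    rw [aeval_baseChange_map, LinearMap.ker_baseChange]
  have hcop : (spectralValues (LinearMap.charpoly α) : Set ℝ).Pairwise (IsCoprime on
      fun σ ↦ (spectralPart (LinearMap.charpoly α) σ).map (algebraMap K Kbar)) :=
    fun σ _ τ _ h ↦ (spectralPart_isCoprime _ h).map (mapRingHom (algebraMap K Kbar))
  have hprod : aeval (α.baseChange Kbar) (∏ σ ∈ spectralValues (LinearMap.charpoly α),
      (spectralPart (LinearMap.charpoly α) σ).map (algebraMap K Kbar)) = 0 := by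
    rw [← Polynomial.map_prod, aeval_baseChange_map, prod_spectralPart (LinearMap.charpoly_monic α),
      LinearMap.aeval_self_charpoly, LinearMap.baseChange_zero]
  have htop : ⨆ σ, N σ = ⊤ := top_le_iff.1 <|
    (iSup_ker_aeval_eq_top _ _ _ hcop hprod).ge.trans (iSup₂_le fun σ _ ↦ le_iSup N σ)
  rw [← hN]
  exact (congrFun (((iSupIndep_genEigSum α v).le_iff_eq_of_iSup_eq_top htop).1
    (ker_aeval_spectralPart_le_genEigSum α hv _)) ρ).symm

theorem eRho_eq_ker [FiniteDimensional K E] (ρ : ℝ) :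
    eRho α Kbar v ρ = LinearMap.ker (aeval α (spectralPart (LinearMap.charpoly α) ρ)) := by
  rw [eRho, genEigSum_eq_baseChange_ker α hv, Submodule.comap_mk_baseChange]

theorem mem_rSet_of_mem_spectralValues [FiniteDimensional K E] {ρ : ℝ}
    (hρ : ρ ∈ spectralValues (LinearMap.charpoly α)) : ρ ∈ rSet α Kbar v := by
  have := IsAlgClosure.isAlgClosed K (K := Kbar)
  obtain ⟨μ, hμ, rfl⟩ := exists_aeval_eq_zero_of_mem_spectralValues hv hρ
  refine ⟨μ, ?_, rfl⟩
  rw [Module.End.hasEigenvalue_iff_isRoot_charpoly, LinearMap.charpoly_baseChange, IsRoot,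
    eval_map_algebraMap, hμ]

end GenEigSum

/-- For each `ρ ∈ R(α)`, the subspace `(E_K̄)_ρ` of `K̄ ⊗ E` is defined
over `K`, i.e. it is spanned over `K̄` by `E_ρ := (E_K̄)_ρ ∩ E`.  Consequently `E` is the
direct sum of the subspaces `E_ρ`, `ρ ∈ R(α)`, and each `E_ρ` is `α`-invariant. -/
theorem genEigSum_defined_over_K
    {K : Type*} [NontriviallyNormedField K] [IsUltrametricDist K] [CompleteSpace K]
    {E : Type*} [AddCommGroup E] [Module K E] [FiniteDimensional K E]
    (α : E →ₗ[K] E)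
    {Kbar : Type*} [Field Kbar] [Algebra K Kbar] [IsAlgClosure K Kbar]
    (v : AbsoluteValue Kbar ℝ) (hv : ∀ x : K, v (algebraMap K Kbar x) = ‖x‖) :
    (∀ ρ ∈ rSet α Kbar v,
      genEigSum α Kbar v ρ =
        Submodule.span Kbar (⇑(TensorProduct.mk K Kbar E 1) '' (eRho α Kbar v ρ : Set E))) ∧
    iSupIndep (fun ρ : ↥(rSet α Kbar v) => eRho α Kbar v ρ.1) ∧
    (⨆ ρ : ↥(rSet α Kbar v), eRho α Kbar v ρ.1) = ⊤ ∧
    (∀ ρ ∈ rSet α Kbar v, ∀ x ∈ eRho α Kbar v ρ, α x ∈ eRho α Kbar v ρ) := by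
  refine ⟨fun ρ _ ↦ ?_, ?_, top_le_iff.1 ?_, fun ρ _ x hx ↦ ?_⟩
  · rw [genEigSum_eq_baseChange_ker α hv, ← eRho_eq_ker α hv, Submodule.baseChange_eq_span,
      Submodule.map_coe]
  · exact ((iSupIndep_genEigSum α v).comap_restrictScalars
      (Module.Flat.tensorProduct_mk_injective K E Kbar)).comp Subtype.val_injective
  · rw [← iSup_ker_aeval_eq_top α _ _ (fun σ _ τ _ h ↦ spectralPart_isCoprime _ h)
      (by rw [prod_spectralPart (LinearMap.charpoly_monic α), LinearMap.aeval_self_charpoly])]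
    exact iSup₂_le fun ρ hρ ↦
      le_iSup_of_le ⟨ρ, mem_rSet_of_mem_spectralValues α hv hρ⟩ (eRho_eq_ker α hv ρ).ge
  · rw [eRho_eq_ker α hv] at hx ⊢
    exact apply_mem_ker_aeval α _ hx
end

section
/- Let (K,|·|) be a complete ultrametric field, E a finite-dimensional K-vector space, and α : E → E a K-linear map. For each ρ ∈ R(α) with ρ ≠ 0, there exists an ultrametric norm ‖·‖_ρ on E_ρ such that ‖α(x)‖_ρ = ρ·‖x‖_ρ for every x ∈ E_ρ. -/
open scoped TensorProduct

/-!
Over `K̄` the space `K̄ ⊗ E` is the direct sum of the generalized eigenspaces `W_μ` of `α ⊗ id`.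
On `W_μ` write `α = μ + n` with `n` nilpotent; weighting the iterates `n ^ j` by `r⁻¹ ^ j` in a
sup norm makes `n` contract by a factor `r < |μ|`, and then the ultrametric inequality is an
equality, `‖α x‖ = ‖μ x‖ = |μ| ‖x‖`. Taking the supremum of these block norms gives a norm on
`K̄ ⊗ E` that scales by `ρ` on `(E_K̄)_ρ`; it restricts to `E ⊆ K̄ ⊗ E`, and since `|·|` extends
the ultrametric norm of `K` it is itself ultrametric.
-/

open Module
open scoped NNReal

universe u v w

namespace AbsoluteValue

variable {R : Type u} [Semiring R]

def toNNReal (v : AbsoluteValue R ℝ) : AbsoluteValue R ℝ≥0 where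
  toFun c := (⟨v c, v.nonneg c⟩ : ℝ≥0)
  map_mul' a b := NNReal.eq (v.map_mul a b)
  nonneg' _ := zero_le
  eq_zero' c := NNReal.coe_eq_zero.symm.trans (v.eq_zero (x := c))
  add_le' a b := v.add_le a b

@[simp] lemma coe_toNNReal_apply (v : AbsoluteValue R ℝ) (c : R) : (v.toNNReal c : ℝ) = v c := rfl

lemma isNonarchimedean_toNNReal {v : AbsoluteValue R ℝ} (hv : IsNonarchimedean v) :
    IsNonarchimedean v.toNNReal := fun a b => by
  rw [← NNReal.coe_le_coe, NNReal.coe_max]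
  exact hv a b

lemma isNonarchimedean_of_algebraMap_eq_norm {K L : Type*} [NormedField K] [IsUltrametricDist K]
    [Field L] [Algebra K L] (v : AbsoluteValue L ℝ) (hv : ∀ x : K, v (algebraMap K L x) = ‖x‖) :
    IsNonarchimedean v := by
  have : IsUltrametricDist (WithAbs v) :=
    IsUltrametricDist.isUltrametricDist_of_forall_norm_natCast_le_one fun n => by
      have hn : (n : WithAbs v).ofAbs = algebraMap K L n := by
        rw [map_natCast]
        exact map_natCast (WithAbs.equiv v) n
      rw [WithAbs.norm_eq_apply_ofAbs, hn, hv]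
      exact IsUltrametricDist.norm_natCast_le_one K n
  intro a b
  exact IsUltrametricDist.norm_add_le_max (WithAbs.toAbs v a) (WithAbs.toAbs v b)

end AbsoluteValue

section UltrametricNorm

variable {L : Type u} [Field L] (v : AbsoluteValue L ℝ)
  {M : Type v} [AddCommGroup M] [Module L M] {M' : Type w} [AddCommGroup M'] [Module L M']

structure IsUltrametricSeminorm (N : M → ℝ≥0) : Prop where
  map_smul : ∀ (c : L) (x : M), N (c • x) = v.toNNReal c * N x
  isNonarchimedean : IsNonarchimedean N

structure IsUltrametricNorm (N : M → ℝ≥0) : Prop extends IsUltrametricSeminorm v N where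
  eq_zero_of_eq_zero : ∀ x, N x = 0 → x = 0

variable {v}

namespace IsUltrametricSeminorm

variable {N : M → ℝ≥0} (hN : IsUltrametricSeminorm v N)
include hN

lemma map_zero : N 0 = 0 := by
  simpa using hN.map_smul 0 0

lemma map_neg (x : M) : N (-x) = N x := by
  have : v.toNNReal (-1) = 1 := NNReal.eq (by simp)
  rw [← neg_one_smul L x, hN.map_smul, this, one_mul]

lemma map_add_eq_left_of_lt {x y : M} (h : N y < N x) : N (x + y) = N x := by
  rw [IsNonarchimedean.add_eq_max_of_ne' N hN.isNonarchimedean (fun a => (hN.map_neg a).symm)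
    h.ne', max_eq_left h.le]

lemma comp (T : M' →ₗ[L] M) : IsUltrametricSeminorm v (fun x => N (T x)) where
  map_smul c x := by rw [T.map_smul, hN.map_smul]
  isNonarchimedean x y := by
    simp only [T.map_add]
    exact hN.isNonarchimedean _ _

lemma const_mul (r : ℝ≥0) : IsUltrametricSeminorm v (fun x => r * N x) where
  map_smul c x := by rw [hN.map_smul, mul_left_comm]
  isNonarchimedean x y := by
    simp only [← mul_max]
    exact mul_le_mul_of_nonneg_left (hN.isNonarchimedean x y) zero_le

end IsUltrametricSeminorm

lemma IsUltrametricSeminorm.finset_sup {ι : Type*} (s : Finset ι) {N : ι → M → ℝ≥0}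
    (hN : ∀ i ∈ s, IsUltrametricSeminorm v (N i)) :
    IsUltrametricSeminorm v (fun x => s.sup fun i => N i x) where
  map_smul c x := by
    rw [NNReal.mul_finset_sup]
    exact Finset.sup_congr rfl fun i hi => (hN i hi).map_smul c x
  isNonarchimedean x y := Finset.sup_le fun i hi =>
    ((hN i hi).isNonarchimedean x y).trans
      (max_le_max (Finset.le_sup (f := fun i => N i x) hi) (Finset.le_sup (f := fun i => N i y) hi))

lemma isUltrametricSeminorm_self (hv : IsNonarchimedean v) :
    IsUltrametricSeminorm v (v.toNNReal : L → ℝ≥0) where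
  map_smul c x := by rw [smul_eq_mul, map_mul]
  isNonarchimedean := AbsoluteValue.isNonarchimedean_toNNReal hv

lemma IsUltrametricNorm.finset_sup {ι : Type*} (s : Finset ι) {N : ι → M → ℝ≥0}
    (hN : ∀ i ∈ s, IsUltrametricSeminorm v (N i))
    (h : ∀ x, (∀ i ∈ s, N i x = 0) → x = 0) :
    IsUltrametricNorm v (fun x => s.sup fun i => N i x) where
  toIsUltrametricSeminorm := IsUltrametricSeminorm.finset_sup s hN
  eq_zero_of_eq_zero x hx := h x fun i hi => by
    simpa using (Finset.sup_eq_bot_iff _ s).mp hx i hi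

lemma exists_isUltrametricNorm [FiniteDimensional L M] (hv : IsNonarchimedean v) :
    ∃ N : M → ℝ≥0, IsUltrametricNorm v N := by
  let b := finBasis L M
  refine ⟨_, IsUltrametricNorm.finset_sup Finset.univ
    (fun i _ => (isUltrametricSeminorm_self hv).comp (b.coord i)) fun x hx => ?_⟩
  exact b.forall_coord_eq_zero_iff.mp fun i => by simpa using hx i (Finset.mem_univ i)

lemma IsUltrametricNorm.exists_apply_le_mul_of_isNilpotent {N : M → ℝ≥0}
    (hN : IsUltrametricNorm v N) {n : End L M} (hn : IsNilpotent n) {r : ℝ≥0} (hr : r ≠ 0) :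
    ∃ N' : M → ℝ≥0, IsUltrametricNorm v N' ∧ ∀ x, N' (n x) ≤ r * N' x := by
  obtain ⟨k, hk⟩ := hn
  let N' x := (Finset.range (k + 1)).sup fun j => r⁻¹ ^ j * N ((n ^ j) x)
  have hN'term : ∀ x, ∀ j ≤ k, r⁻¹ ^ j * N ((n ^ j) x) ≤ N' x := fun x j hj =>
    Finset.le_sup (f := fun j => r⁻¹ ^ j * N ((n ^ j) x)) (Finset.mem_range_succ_iff.mpr hj)
  refine ⟨N', IsUltrametricNorm.finset_sup _
    (fun j _ => (hN.comp _).const_mul _) fun x hx => hN.eq_zero_of_eq_zero x ?_, fun x => ?_⟩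
  · simpa using hx 0 (by simp)
  refine Finset.sup_le fun j _ => ?_
  rw [← End.mul_apply, ← pow_succ]
  rcases le_or_gt (j + 1) k with hj | hj
  · calc r⁻¹ ^ j * N ((n ^ (j + 1)) x) = r * (r⁻¹ ^ (j + 1) * N ((n ^ (j + 1)) x)) := by
          rw [pow_succ' r⁻¹, mul_assoc, mul_inv_cancel_left₀ hr]
      _ ≤ r * N' x := by gcongr; exact hN'term x _ hj
  · simp [pow_eq_zero_of_le hj.le hk, hN.map_zero]

lemma IsUltrametricSeminorm.map_eq_mul_of_sub_le {N : M → ℝ≥0} (hN : IsUltrametricSeminorm v N)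
    {g : End L M} {μ : L} {r : ℝ≥0} (hr : r < v.toNNReal μ)
    (hg : ∀ x, N (g x - μ • x) ≤ r * N x) (x : M) :
    N (g x) = v.toNNReal μ * N x := by
  rw [← hN.map_smul, ← add_sub_cancel (μ • x) (g x)]
  rcases eq_or_ne (N x) 0 with hx | hx
  · have h0 : N (g x - μ • x) = 0 := by simpa [hx] using hg x
    have hμx : N (μ • x) = 0 := by simp [hN.map_smul, hx]
    rw [hμx]
    exact le_antisymm ((hN.isNonarchimedean _ _).trans (by simp [h0, hμx])) zero_le
  · refine hN.map_add_eq_left_of_lt ((hg x).trans_lt ?_)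
    rw [hN.map_smul]
    exact mul_lt_mul_of_pos_right hr (pos_iff_ne_zero.mpr hx)

lemma exists_isUltrametricNorm_map_eq_mul_of_isNilpotent [FiniteDimensional L M]
    (hv : IsNonarchimedean v) {g : End L M} {μ : L} (hμ : μ ≠ 0)
    (hg : IsNilpotent (g - algebraMap L (End L M) μ)) :
    ∃ N : M → ℝ≥0, IsUltrametricNorm v N ∧ ∀ x, N (g x) = v.toNNReal μ * N x := by
  have hμ' : 0 < v.toNNReal μ := v.toNNReal.pos hμ
  obtain ⟨N₀, hN₀⟩ := exists_isUltrametricNorm (M := M) hv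
  obtain ⟨N, hN, hgN⟩ := hN₀.exists_apply_le_mul_of_isNilpotent hg (half_pos hμ').ne'
  exact ⟨N, hN, hN.map_eq_mul_of_sub_le (half_lt_self hμ') fun x => by simpa using hgN x⟩

namespace DirectSum

variable {L : Type u} [Field L] {M : Type v} [AddCommGroup M] [Module L M] {ι : Type w}
  [DecidableEq ι] (W : ι → Submodule L M) [Decomposition W]

lemma decompose_apply_of_mapsTo {f : End L M} (hf : ∀ i, Set.MapsTo f (W i) (W i))
    (x : M) (i : ι) : decompose W (f x) i = f.restrict (hf i) (decompose W x i) := by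
  induction x using Decomposition.inductionOn W with
  | zero => simp
  | @homogeneous j y =>
    have hfy : f y = ((⟨f y, hf j y.2⟩ : W j) : M) := rfl
    rw [hfy, decompose_coe, decompose_coe]
    rcases eq_or_ne j i with rfl | hji
    · simp only [of_eq_same]
      rfl
    · simp only [of_eq_of_ne _ _ _ hji.symm, map_zero]
  | add y z hy hz => simp [decompose_add, hy, hz]

lemma decompose_apply_eq_zero_of_mem_iSup {p : ι → Prop} {x : M}
    (hx : x ∈ ⨆ (i) (_ : p i), W i) {j : ι} (hj : ¬ p j) : decompose W x j = 0 := by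
  suffices (⨆ (i) (_ : p i), W i) ≤
      LinearMap.ker ((component L ι _ j).comp (decomposeLinearEquiv W).toLinearMap) from this hx
  refine iSup₂_le fun i hi y hy => ?_
  have hij : i ≠ j := by rintro rfl; exact hj hi
  simpa [decomposeLinearEquiv_apply, ← apply_eq_component] using decompose_of_mem_ne W hy hij

end DirectSum

open DirectSum in
lemma exists_isUltrametricNorm_map_eq_mul_of_decomposition {L : Type*} [Field L]
    {v : AbsoluteValue L ℝ} {M : Type*} [AddCommGroup M] [Module L M] [FiniteDimensional L M]
    {ι : Type*} [DecidableEq ι] (W : ι → Submodule L M) [Decomposition W]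
    {N : ∀ i, W i → ℝ≥0} (hN : ∀ i, IsUltrametricNorm v (N i))
    {f : End L M} (hf : ∀ i, Set.MapsTo f (W i) (W i)) {p : ι → Prop} {ρ : ℝ≥0}
    (hρ : ∀ i, p i → ∀ x, N i (f.restrict (hf i) x) = ρ * N i x) :
    ∃ N' : M → ℝ≥0, IsUltrametricNorm v N' ∧ ∀ x ∈ ⨆ (i) (_ : p i), W i, N' (f x) = ρ * N' x := by
  let s := (Submodule.finite_ne_bot_of_iSupIndep
    (Decomposition.isInternal W).submodule_iSupIndep).toFinset
  refine ⟨fun x => s.sup fun i => N i (decompose W x i), IsUltrametricNorm.finset_sup s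
    (fun i _ => (hN i).comp ((component L ι _ i).comp (decomposeLinearEquiv W).toLinearMap))
    fun x hx => ?_, fun x hx => ?_⟩
  · suffices decompose W x = 0 by simpa using congrArg (decompose W).symm this
    ext i : 1
    by_cases hi : i ∈ s
    · exact (hN i).eq_zero_of_eq_zero _ (hx i hi)
    · have hWi : W i = ⊥ := by simpa [s] using hi
      exact Subtype.ext ((Submodule.eq_bot_iff _).mp hWi _ (decompose W x i).2)
  · rw [NNReal.mul_finset_sup]
    refine Finset.sup_congr rfl fun i _ => ?_
    rw [decompose_apply_of_mapsTo W hf]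
    by_cases hi : p i
    · exact hρ i hi _
    · simp [decompose_apply_eq_zero_of_mem_iSup W hx hi, (hN i).map_zero]

lemma Module.End.exists_isUltrametricNorm_map_eq_mul {L : Type*} [Field L] [IsAlgClosed L]
    {v : AbsoluteValue L ℝ} (hv : IsNonarchimedean v) {M : Type*} [AddCommGroup M] [Module L M]
    [FiniteDimensional L M] (f : End L M) {p : L → Prop} {ρ : ℝ≥0} (hρ : ρ ≠ 0)
    (hp : ∀ μ, p μ → v.toNNReal μ = ρ) :
    ∃ N : M → ℝ≥0, IsUltrametricNorm v N ∧
      ∀ x ∈ ⨆ (μ) (_ : p μ), f.maxGenEigenspace μ, N (f x) = ρ * N x := by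
  classical
  let _ := (DirectSum.isInternal_submodule_of_iSupIndep_of_iSup_eq_top
    f.independent_maxGenEigenspace f.iSup_maxGenEigenspace_eq_top).chooseDecomposition
  have hf μ := f.mapsTo_maxGenEigenspace_of_comm (Commute.refl f) μ
  have hblock μ : ∃ N : f.maxGenEigenspace μ → ℝ≥0, IsUltrametricNorm v N ∧
      (p μ → ∀ x, N (f.restrict (hf μ) x) = ρ * N x) := by
    by_cases hμ : p μ
    · have hμ0 : μ ≠ 0 := by
        rintro rfl
        exact hρ (by simpa using (hp 0 hμ).symm)
      have hnil : IsNilpotent (f.restrict (hf μ) - algebraMap L (End L _) μ) := by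
        convert f.isNilpotent_restrict_maxGenEigenspace_sub_algebraMap μ using 1
        ext
        simp [Module.algebraMap_end_apply]
        rfl
      obtain ⟨N, hN, hfN⟩ := exists_isUltrametricNorm_map_eq_mul_of_isNilpotent hv hμ0 hnil
      exact ⟨N, hN, fun _ x => hp μ hμ ▸ hfN x⟩
    · obtain ⟨N, hN⟩ := exists_isUltrametricNorm (M := f.maxGenEigenspace μ) hv
      exact ⟨N, hN, fun h => absurd h hμ⟩
  choose N hN hfN using hblock
  exact exists_isUltrametricNorm_map_eq_mul_of_decomposition _ hN hf hfN

lemma TensorProduct.mk_one_injective {R A M : Type*} [CommRing R] [Semiring A] [Algebra R A]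
    [AddCommGroup M] [Module R M] [Module.Flat R M] (hA : Function.Injective (algebraMap R A)) :
    Function.Injective (TensorProduct.mk R A M 1) := by
  convert (Module.Flat.rTensor_preserves_injective_linearMap (Algebra.linearMap R A) hA).comp
    (TensorProduct.lid R M).symm.injective
  ext
  simp

theorem exists_ultrametric_norm_on_eRho_general
    {K : Type*} [NontriviallyNormedField K] [IsUltrametricDist K]
    {E : Type*} [AddCommGroup E] [Module K E] [FiniteDimensional K E]
    (α : E →ₗ[K] E)
    {Kbar : Type*} [Field Kbar] [Algebra K Kbar] [IsAlgClosure K Kbar]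
    (v : AbsoluteValue Kbar ℝ) (hv : ∀ x : K, v (algebraMap K Kbar x) = ‖x‖) :
    ∀ ρ ∈ rSet α Kbar v, ρ ≠ 0 →
      ∃ N : E → ℝ,
        (∀ x ∈ eRho α Kbar v ρ, 0 ≤ N x) ∧
        (∀ x ∈ eRho α Kbar v ρ, (N x = 0 ↔ x = 0)) ∧
        (∀ (c : K), ∀ x ∈ eRho α Kbar v ρ, N (c • x) = ‖c‖ * N x) ∧
        (∀ x ∈ eRho α Kbar v ρ, ∀ y ∈ eRho α Kbar v ρ, N (x + y) ≤ max (N x) (N y)) ∧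
        (∀ x ∈ eRho α Kbar v ρ, N (α x) = ρ * N x) := by
  rintro _ ⟨μ, -, rfl⟩ hμ
  have : IsAlgClosed Kbar := IsAlgClosure.isAlgClosed K
  obtain ⟨N, hN, hNα⟩ := Module.End.exists_isUltrametricNorm_map_eq_mul
    (v.isNonarchimedean_of_algebraMap_eq_norm hv) (α.baseChange Kbar) (p := fun ν => v ν = v μ)
    (ρ := v.toNNReal μ) (by simpa using hμ) fun ν hν => NNReal.eq hν
  have hinj := TensorProduct.mk_one_injective (M := E) (algebraMap K Kbar).injective
  refine ⟨fun x => N (1 ⊗ₜ x), fun _ _ => (N _).2, fun x _ => ?_, fun c x _ => ?_,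
    fun x _ y _ => ?_, fun x hx => ?_⟩
  · rw [NNReal.coe_eq_zero]
    exact ⟨fun h => hinj (by simpa using hN.eq_zero_of_eq_zero _ h),
      by rintro rfl; simp [hN.map_zero]⟩
  · dsimp only
    rw [TensorProduct.tmul_smul, ← algebraMap_smul Kbar, hN.map_smul, NNReal.coe_mul,
      AbsoluteValue.coe_toNNReal_apply, hv]
  · dsimp only
    rw [TensorProduct.tmul_add]
    exact_mod_cast hN.isNonarchimedean _ _
  · dsimp only
    rw [← v.coe_toNNReal_apply, ← NNReal.coe_mul, NNReal.coe_inj]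
    simpa using hNα _ hx

/-- For each nonzero `ρ ∈ R(α)` there is an ultrametric norm `N` on `E_ρ`
such that `N (α x) = ρ * N x` for all `x ∈ E_ρ`. -/
theorem exists_ultrametric_norm_on_eRho
    {K : Type*} [NontriviallyNormedField K] [IsUltrametricDist K] [CompleteSpace K]
    {E : Type*} [AddCommGroup E] [Module K E] [FiniteDimensional K E]
    (α : E →ₗ[K] E)
    {Kbar : Type*} [Field Kbar] [Algebra K Kbar] [IsAlgClosure K Kbar]
    (v : AbsoluteValue Kbar ℝ) (hv : ∀ x : K, v (algebraMap K Kbar x) = ‖x‖) :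
    ∀ ρ ∈ rSet α Kbar v, ρ ≠ 0 →
      ∃ N : E → ℝ,
        (∀ x ∈ eRho α Kbar v ρ, 0 ≤ N x) ∧
        (∀ x ∈ eRho α Kbar v ρ, (N x = 0 ↔ x = 0)) ∧
        (∀ (c : K), ∀ x ∈ eRho α Kbar v ρ, N (c • x) = ‖c‖ * N x) ∧
        (∀ x ∈ eRho α Kbar v ρ, ∀ y ∈ eRho α Kbar v ρ, N (x + y) ≤ max (N x) (N y)) ∧
        (∀ x ∈ eRho α Kbar v ρ, N (α x) = ρ * N x) :=
  exists_ultrametric_norm_on_eRho_general α v hv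
end UltrametricNorm
end

section
/- Let E be a finite-dimensional vector space over a complete ultrametric field (K,|·|) and α : E → E be a nilpotent K-linear map. Then for every ε > 0 there exists an ultrametric norm ‖·‖ on E with respect to which α has operator norm < ε. -/
/-!
Fix any ultrametric norm `p` on `E`, e.g. the sup of the absolute values of the coordinates in a
basis. If `α ^ n = 0` and `c > 0`, then `N x = max_{i < n} c ^ i * p (α ^ i x)` is again an
ultrametric norm, and `c * N (α x) ≤ N x`: the terms of `c * N (α x)` are terms of `N x`, except
the last one, which vanishes. Taking `c > 1 / ε` makes the operator norm of `α` at most `1 / c`.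
-/

open scoped NNReal

/-- `N` is an ultrametric norm on the `K`-vector space `E`. -/
def IsUltraNorm (K : Type*) [NormedField K] {E : Type*} [AddCommGroup E] [Module K E]
    (N : E → ℝ) : Prop :=
  (∀ x : E, 0 ≤ N x) ∧ (∀ x : E, N x = 0 ↔ x = 0) ∧
    (∀ (c : K) (x : E), N (c • x) = ‖c‖ * N x) ∧
    ∀ x y : E, N (x + y) ≤ max (N x) (N y)

structure IsUltraSeminorm (K : Type*) [NormedField K] {E : Type*} [AddCommGroup E] [Module K E]
    (p : E → ℝ≥0) : Prop where
  map_smul : ∀ (c : K) (x : E), p (c • x) = ‖c‖₊ * p x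
  map_add_le_max : ∀ x y : E, p (x + y) ≤ max (p x) (p y)

section UltraSeminorm

variable {K : Type*} [NormedField K] {E F : Type*} [AddCommGroup E] [Module K E]
  [AddCommGroup F] [Module K F]

namespace IsUltraSeminorm

variable {p : E → ℝ≥0}

theorem map_zero (hp : IsUltraSeminorm K p) : p 0 = 0 := by
  simpa using hp.map_smul 0 0

theorem nnnorm [IsUltrametricDist K] : IsUltraSeminorm K (fun c : K => ‖c‖₊) where
  map_smul c x := nnnorm_mul c x
  map_add_le_max := IsUltrametricDist.nnnorm_add_le_max

theorem comp {q : F → ℝ≥0} (hq : IsUltraSeminorm K q) (f : E →ₗ[K] F) :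
    IsUltraSeminorm K (fun x => q (f x)) where
  map_smul c x := by rw [f.map_smul, hq.map_smul]
  map_add_le_max x y := by rw [f.map_add]; exact hq.map_add_le_max _ _

theorem const_mul (hp : IsUltraSeminorm K p) (a : ℝ≥0) : IsUltraSeminorm K (fun x => a * p x) where
  map_smul c x := by rw [hp.map_smul, mul_left_comm]
  map_add_le_max x y := by rw [← mul_max]; gcongr; exact hp.map_add_le_max x y

theorem finset_sup {ι : Type*} {s : Finset ι} {q : ι → E → ℝ≥0}
    (hq : ∀ i ∈ s, IsUltraSeminorm K (q i)) : IsUltraSeminorm K (fun x => s.sup fun i => q i x) where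
  map_smul c x := by
    rw [NNReal.mul_finset_sup]
    exact Finset.sup_congr rfl fun i hi => (hq i hi).map_smul c x
  map_add_le_max x y := Finset.sup_le fun i hi =>
    ((hq i hi).map_add_le_max x y).trans
      (max_le_max (Finset.le_sup (f := fun i => q i x) hi) (Finset.le_sup (f := fun i => q i y) hi))

theorem isUltraNorm_coe (hp : IsUltraSeminorm K p) (hdef : ∀ x, p x = 0 → x = 0) :
    IsUltraNorm K (fun x => (p x : ℝ)) := by
  refine ⟨fun x => (p x).2, fun x => ?_, fun c x => ?_, fun x y => ?_⟩
  · rw [NNReal.coe_eq_zero]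
    exact ⟨hdef x, fun hx => hx ▸ hp.map_zero⟩
  · simp only [hp.map_smul, NNReal.coe_mul, coe_nnnorm]
  · exact_mod_cast hp.map_add_le_max x y

end IsUltraSeminorm

section BasisSupNorm

variable {ι : Type*} [Fintype ι]

noncomputable def Module.Basis.supNNNorm (b : Module.Basis ι K E) (x : E) : ℝ≥0 :=
  Finset.univ.sup fun i => ‖b.repr x i‖₊

theorem Module.Basis.isUltraSeminorm_supNNNorm [IsUltrametricDist K] (b : Module.Basis ι K E) :
    IsUltraSeminorm K b.supNNNorm :=
  IsUltraSeminorm.finset_sup fun i _ => IsUltraSeminorm.nnnorm.comp (b.coord i)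

theorem Module.Basis.eq_zero_of_supNNNorm_eq_zero (b : Module.Basis ι K E) {x : E}
    (hx : b.supNNNorm x = 0) : x = 0 := by
  refine b.ext_elem fun i => ?_
  rw [map_zero, Finsupp.zero_apply, ← nnnorm_eq_zero, ← nonpos_iff_eq_zero, ← hx]
  exact Finset.le_sup (f := fun i => ‖b.repr x i‖₊) (Finset.mem_univ i)

end BasisSupNorm

section OrbitSup

def orbitSup (p : E → ℝ≥0) (α : E →ₗ[K] E) (c : ℝ≥0) (n : ℕ) (x : E) : ℝ≥0 :=
  (Finset.range n).sup fun i => c ^ i * p ((α ^ i) x)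

variable {p : E → ℝ≥0} {α : E →ₗ[K] E} {c : ℝ≥0} {n : ℕ}

theorem IsUltraSeminorm.orbitSup (hp : IsUltraSeminorm K p) (α : E →ₗ[K] E) (c : ℝ≥0) (n : ℕ) :
    IsUltraSeminorm K (orbitSup p α c n) :=
  IsUltraSeminorm.finset_sup fun i _ => (hp.comp (α ^ i)).const_mul (c ^ i)

theorem le_orbitSup (hn : 0 < n) (x : E) : p x ≤ orbitSup p α c n x := by
  unfold orbitSup
  simpa using Finset.le_sup (f := fun i => c ^ i * p ((α ^ i) x)) (Finset.mem_range.mpr hn)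

theorem mul_orbitSup_apply_le (hp : IsUltraSeminorm K p) (hα : α ^ n = 0) (x : E) :
    c * orbitSup p α c n (α x) ≤ orbitSup p α c n x := by
  rw [orbitSup, NNReal.mul_finset_sup]
  refine Finset.sup_le fun i hi => ?_
  have hshift : c * (c ^ i * p ((α ^ i) (α x))) = c ^ (i + 1) * p ((α ^ (i + 1)) x) := by
    rw [pow_succ, pow_succ, Module.End.mul_apply]; ring
  rw [hshift]
  rcases (Nat.succ_le_of_lt (Finset.mem_range.mp hi)).lt_or_eq with hlt | heq
  · exact Finset.le_sup (f := fun i => c ^ i * p ((α ^ i) x)) (Finset.mem_range.mpr hlt)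
  · rw [show i + 1 = n from heq, hα]
    simp [hp.map_zero]

theorem orbitSup_apply_le (hp : IsUltraSeminorm K p) (hα : α ^ n = 0) (hc : c ≠ 0) (x : E) :
    orbitSup p α c n (α x) ≤ c⁻¹ * orbitSup p α c n x := by
  rw [← inv_mul_cancel_left₀ hc (orbitSup p α c n (α x))]
  gcongr
  exact mul_orbitSup_apply_le hp hα x

end OrbitSup

end UltraSeminorm

theorem nilpotent_exists_ultrametric_norm_opNorm_lt_general
    {K : Type*} [NontriviallyNormedField K] [IsUltrametricDist K]
    {E : Type*} [AddCommGroup E] [Module K E] [FiniteDimensional K E]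
    (α : E →ₗ[K] E) (hα : IsNilpotent α) {ε : ℝ} (hε : 0 < ε) :
    ∃ N : E → ℝ, IsUltraNorm K N ∧ ∃ b, b < ε ∧ ∀ x : E, N (α x) ≤ b * N x := by
  obtain ⟨n, hn⟩ := hα
  have hn' : α ^ (n + 1) = 0 := by rw [pow_succ, hn, zero_mul]
  let b := Module.finBasis K E
  have hp := b.isUltraSeminorm_supNNNorm
  let c : ℝ≥0 := ⟨2 / ε, by positivity⟩
  have hc : c ≠ 0 := ne_of_gt (show (0 : ℝ) < 2 / ε by positivity)
  refine ⟨fun x => orbitSup b.supNNNorm α c (n + 1) x,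
    (hp.orbitSup α c _).isUltraNorm_coe fun x hx =>
      b.eq_zero_of_supNNNorm_eq_zero (le_antisymm (hx ▸ le_orbitSup n.succ_pos x) zero_le),
    ε / 2, by linarith, fun x => ?_⟩
  have hcinv : ((c⁻¹ : ℝ≥0) : ℝ) = ε / 2 := by
    rw [NNReal.coe_inv, show (c : ℝ) = 2 / ε from rfl, inv_div]
  rw [← hcinv, ← NNReal.coe_mul, NNReal.coe_le_coe]
  exact orbitSup_apply_le hp hn' hc x

/-- A nilpotent linear self-map of a finite-dimensional vector space over a
complete ultrametric field has operator norm `< ε` with respect to a suitable ultrametric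
norm, for every `ε > 0`. -/
theorem nilpotent_exists_ultrametric_norm_opNorm_lt
    {K : Type*} [NontriviallyNormedField K] [IsUltrametricDist K] [CompleteSpace K]
    {E : Type*} [AddCommGroup E] [Module K E] [FiniteDimensional K E]
    (α : E →ₗ[K] E) (hα : IsNilpotent α) {ε : ℝ} (hε : 0 < ε) :
    ∃ N : E → ℝ, IsUltraNorm K N ∧ ∃ b, b < ε ∧ ∀ x : E, N (α x) ≤ b * N x :=
  nilpotent_exists_ultrametric_norm_opNorm_lt_general α hα hε
end

section
/- Let E be a finite-dimensional vector space over a complete ultrametric field (K,|·|), α : E → E a K-linear map, ε > 0, and E_0 := {x ∈ E : α^n(x) = 0 for some n ∈ ℕ}. Then E admits a norm ‖·‖ adapted to α such that the operator norm of α|_{E_0} with respect to ‖·‖ is < ε. -/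
open scoped TensorProduct

/-- A norm `N` on `E` is adapted to `α` if it is ultrametric, if the norm of a sum of vectors
taken from the distinct subspaces `E_ρ`, `ρ ∈ R(α)`, is the maximum of their norms, and if
`N (α x) = ρ * N x` for all `x ∈ E_ρ` and `0 ≠ ρ ∈ R(α)`. -/
def IsAdaptedNorm {K : Type*} [NontriviallyNormedField K]
    {E : Type*} [AddCommGroup E] [Module K E] (α : E →ₗ[K] E)
    {Kbar : Type*} [Field Kbar] [Algebra K Kbar]
    (v : AbsoluteValue Kbar ℝ) (N : E → ℝ) : Prop :=
  IsUltraNorm K N ∧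
  (∀ (s : Finset ℝ) (hs : s.Nonempty) (x : ℝ → E), ↑s ⊆ rSet α Kbar v →
    (∀ ρ ∈ s, x ρ ∈ eRho α Kbar v ρ) →
    N (∑ ρ ∈ s, x ρ) = s.sup' hs fun ρ => N (x ρ)) ∧
  (∀ ρ ∈ rSet α Kbar v, ρ ≠ 0 → ∀ x ∈ eRho α Kbar v ρ, N (α x) = ρ * N x)

/-! Over the algebraic closure, `K̄ ⊗ E` is the direct sum of the generalized eigenspaces `V_μ` of
`β = α ⊗ 1`, and `β = μ + n_μ` on `V_μ` with `n_μ` nilpotent. Starting from any ultrametric norm `c`,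
the norm `max_{k ≤ d} δ⁻ᵏ c (n_μᵏ x)` on `V_μ` makes `n_μ` contract by the factor `δ`. Take `δ < ε`
and `δ < |μ|` for every eigenvalue `μ ≠ 0`. Then on `V_μ`, `μ ≠ 0`, the ultrametric isosceles
property gives `‖β x‖ = |μ| ‖x‖`, while on `V_0`, where `β = n_0`, the operator `β` has norm at most
`δ`. The maximum of these block norms over the components is adapted to `β`, and its restriction
to `E = 1 ⊗ E` is adapted to `α`. -/

open Filter Topology Module
open scoped NNReal

namespace Seminorm

section SeminormedRing

variable {𝕜 E F : Type*} [SeminormedRing 𝕜] [AddCommGroup E] [Module 𝕜 E] [AddCommGroup F]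
  [Module 𝕜 F]

lemma isNonarchimedean_comp {p : Seminorm 𝕜 F} (hp : IsNonarchimedean p) (f : E →ₗ[𝕜] F) :
    IsNonarchimedean (p.comp f) := fun x y => by
  simpa only [comp_apply, map_add] using hp (f x) (f y)

lemma isNonarchimedean_smul {p : Seminorm 𝕜 E} (hp : IsNonarchimedean p) (r : ℝ≥0) :
    IsNonarchimedean (r • p) := fun x y => by
  simp only [smul_apply, NNReal.smul_def, smul_eq_mul]
  exact (mul_le_mul_of_nonneg_left (hp x y) r.2).trans_eq (mul_max_of_nonneg _ _ r.2)

lemma isNonarchimedean_finset_sup {ι : Type*} {s : Finset ι} {p : ι → Seminorm 𝕜 E}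
    (hp : ∀ i ∈ s, IsNonarchimedean (p i)) : IsNonarchimedean (s.sup p : Seminorm 𝕜 E) :=
  fun x y => finset_sup_apply_le (le_sup_of_le_left (apply_nonneg _ _)) fun i hi =>
    (hp i hi x y).trans (sup_le_sup (le_finset_sup_apply hi) (le_finset_sup_apply hi))

lemma apply_smul_add_eq {p : Seminorm 𝕜 E} (hp : IsNonarchimedean p) {μ : 𝕜} {δ : ℝ}
    {x y : E} (hy : p y ≤ δ * p x) (hδ : δ < ‖μ‖) : p (μ • x + y) = ‖μ‖ * p x := by
  rcases (apply_nonneg p x).eq_or_lt with hx | hx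
  · have hy0 : p y = 0 := le_antisymm (by simpa [← hx] using hy) (apply_nonneg _ _)
    rw [← hx, mul_zero]
    refine le_antisymm ((hp _ _).trans ?_) (apply_nonneg _ _)
    simp [map_smul_eq_mul, ← hx, hy0]
  · rw [← map_smul_eq_mul p]
    refine hp.add_eq_left_of_lt (hy.trans_lt ?_)
    rw [map_smul_eq_mul]
    exact mul_lt_mul_of_pos_right hδ hx

noncomputable def iterateSup (p : Seminorm 𝕜 E) (n : Module.End 𝕜 E) (δ : ℝ≥0) (D : ℕ) :
    Seminorm 𝕜 E :=
  (Finset.range D).sup fun k => (δ⁻¹ ^ k) • p.comp (n ^ k)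

variable {p : Seminorm 𝕜 E} {n : Module.End 𝕜 E} {δ : ℝ≥0} {D : ℕ}

lemma isNonarchimedean_iterateSup (hp : IsNonarchimedean p) :
    IsNonarchimedean (p.iterateSup n δ D) :=
  isNonarchimedean_finset_sup fun _ _ => isNonarchimedean_smul (isNonarchimedean_comp hp _) _

lemma le_iterateSup (hD : 0 < D) (x : E) : p x ≤ p.iterateSup n δ D x := by
  have := le_finset_sup_apply (p := fun k => (δ⁻¹ ^ k) • p.comp (n ^ k)) (x := x)
    (Finset.mem_range.2 hD)
  simp only [pow_zero, one_smul, comp_apply, Module.End.one_apply] at this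
  exact this

lemma iterateSup_apply_le (hδ : δ ≠ 0) {x : E} (hx : (n ^ D) x = 0) :
    p.iterateSup n δ D (n x) ≤ δ * p.iterateSup n δ D x := by
  refine finset_sup_apply_le (by positivity) fun k hk => ?_
  simp only [smul_apply, comp_apply, NNReal.smul_def, smul_eq_mul]
  rw [← Module.End.mul_apply, ← pow_succ]
  rcases Nat.lt_or_ge (k + 1) D with hkD | hkD
  · calc ((δ⁻¹ ^ k : ℝ≥0) : ℝ) * p ((n ^ (k + 1)) x)
        = δ * (((δ⁻¹ ^ (k + 1) : ℝ≥0) : ℝ) * p ((n ^ (k + 1)) x)) := by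
          have : (δ : ℝ) ≠ 0 := by exact_mod_cast hδ
          push_cast
          rw [pow_succ ((δ : ℝ)⁻¹)]
          field_simp
      _ ≤ δ * p.iterateSup n δ D x := by
          gcongr
          exact le_finset_sup_apply (p := fun k => (δ⁻¹ ^ k) • p.comp (n ^ k))
            (Finset.mem_range.2 hkD)
  · rw [le_antisymm (Finset.mem_range.1 hk) hkD, hx, map_zero, mul_zero]
    positivity

end SeminormedRing

end Seminorm

noncomputable def Module.Basis.supSeminorm {𝕜 E ι : Type*} [NormedField 𝕜] [AddCommGroup E]
    [Module 𝕜 E] [Fintype ι] (b : Basis ι 𝕜 E) : Seminorm 𝕜 E :=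
  Finset.univ.sup fun i => (normSeminorm 𝕜 𝕜).comp (b.coord i)

namespace Module.Basis

variable {𝕜 E ι : Type*} [NormedField 𝕜] [AddCommGroup E] [Module 𝕜 E] [Fintype ι]
  (b : Basis ι 𝕜 E)

lemma isNonarchimedean_supSeminorm [IsUltrametricDist 𝕜] : IsNonarchimedean b.supSeminorm :=
  Seminorm.isNonarchimedean_finset_sup fun _ _ =>
    Seminorm.isNonarchimedean_comp IsUltrametricDist.isNonarchimedean_norm _

lemma eq_zero_of_supSeminorm_eq_zero {x : E} (hx : b.supSeminorm x = 0) : x = 0 :=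
  b.ext_elem fun i => by
    have := Seminorm.le_finset_sup_apply (p := fun i => (normSeminorm 𝕜 𝕜).comp (b.coord i))
      (x := x) (Finset.mem_univ i)
    simp_all [supSeminorm]

end Module.Basis

lemma Submodule.linearMap_ext_of_iSup_eq_top {R M N ι : Type*} [Semiring R] [AddCommMonoid M]
    [Module R M] [AddCommMonoid N] [Module R N] {V : ι → Submodule R M} (hV : ⨆ i, V i = ⊤)
    {f g : M →ₗ[R] N} (hfg : ∀ i, ∀ x ∈ V i, f x = g x) : f = g := by
  refine LinearMap.ext_on (s := ⋃ i, (V i : Set M)) ?_ fun x hx => ?_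
  · rw [← Submodule.iSup_eq_span, hV]
  · obtain ⟨i, hi⟩ := Set.mem_iUnion.1 hx
    exact hfg i x hi

namespace DirectSum.IsInternal

section Ring

variable {R M ι : Type*} [Ring R] [AddCommGroup M] [Module R M] [DecidableEq ι]
  {V : ι → Submodule R M} (h : IsInternal V)

noncomputable def proj (i : ι) : M →ₗ[R] M :=
  (V i).subtype ∘ₗ component R ι (fun i => V i) i ∘ₗ
    (LinearEquiv.ofBijective (coeLinearMap V) h).symm.toLinearMap

lemma proj_mem (i : ι) (x : M) : h.proj i x ∈ V i :=
  Submodule.coe_mem _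

lemma proj_of_mem {i : ι} {x : M} (hx : x ∈ V i) : h.proj i x = x := by
  change ((LinearEquiv.ofBijective (coeLinearMap V) h).symm x i : M) = x
  rw [h.ofBijective_coeLinearMap_of_mem hx]

lemma proj_of_mem_ne {i j : ι} {x : M} (hx : x ∈ V i) (hij : i ≠ j) : h.proj j x = 0 := by
  change ((LinearEquiv.ofBijective (coeLinearMap V) h).symm x j : M) = 0
  rw [h.ofBijective_coeLinearMap_of_mem_ne hij hx, ZeroMemClass.coe_zero]

lemma proj_comp_of_mapsTo {f : Module.End R M} (hf : ∀ i, Set.MapsTo f (V i) (V i)) (i : ι) :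
    h.proj i ∘ₗ f = f ∘ₗ h.proj i :=
  Submodule.linearMap_ext_of_iSup_eq_top h.submodule_iSup_eq_top fun j x hx => by
    by_cases hji : j = i
    · subst hji
      simp [h.proj_of_mem hx, h.proj_of_mem (hf j hx)]
    · simp [h.proj_of_mem_ne hx hji, h.proj_of_mem_ne (hf j hx) hji]

lemma sum_proj {S : Finset ι} (hS : ∀ i ∉ S, V i = ⊥) (x : M) : ∑ i ∈ S, h.proj i x = x := by
  suffices ∑ i ∈ S, h.proj i = LinearMap.id by simpa using LinearMap.congr_fun this x
  refine Submodule.linearMap_ext_of_iSup_eq_top h.submodule_iSup_eq_top fun j x hx => ?_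
  by_cases hj : j ∈ S
  · rw [LinearMap.sum_apply, Finset.sum_eq_single_of_mem j hj
      fun i _ hij => h.proj_of_mem_ne hx (Ne.symm hij), h.proj_of_mem hx, LinearMap.id_apply]
  · simp [(Submodule.mem_bot R).1 (hS j hj ▸ hx)]

lemma proj_eq_zero_of_mem_iSup {κ : Type*} {g : ι → κ} {k : κ} {x : M}
    (hx : x ∈ ⨆ (j : ι) (_ : g j = k), V j) {i : ι} (hi : g i ≠ k) : h.proj i x = 0 := by
  suffices ⨆ (j : ι) (_ : g j = k), V j ≤ LinearMap.ker (h.proj i) from this hx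
  exact iSup₂_le fun j hj y hy => h.proj_of_mem_ne hy fun hji => hi (hji ▸ hj)

end Ring

section Seminorm

variable {𝕜 M ι : Type*} [SeminormedRing 𝕜] [AddCommGroup M] [Module 𝕜 M] [DecidableEq ι]
  {V : ι → Submodule 𝕜 M} (h : IsInternal V)

noncomputable def supSeminorm (S : Finset ι) (p : ι → Seminorm 𝕜 M) : Seminorm 𝕜 M :=
  S.sup fun i => (p i).comp (h.proj i)

variable {S : Finset ι} {p : ι → Seminorm 𝕜 M}

lemma isNonarchimedean_supSeminorm (hp : ∀ i ∈ S, IsNonarchimedean (p i)) :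
    IsNonarchimedean (h.supSeminorm S p) :=
  Seminorm.isNonarchimedean_finset_sup fun i hi => Seminorm.isNonarchimedean_comp (hp i hi) _

lemma apply_proj_le_supSeminorm {i : ι} (hi : i ∈ S) (x : M) :
    p i (h.proj i x) ≤ h.supSeminorm S p x :=
  Seminorm.le_finset_sup_apply (p := fun i => (p i).comp (h.proj i)) hi

lemma eq_zero_of_supSeminorm_eq_zero (hS : ∀ i ∉ S, V i = ⊥)
    (hp : ∀ i ∈ S, ∀ x, p i x = 0 → x = 0) {x : M} (hx : h.supSeminorm S p x = 0) : x = 0 := by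
  rw [← h.sum_proj hS x]
  refine Finset.sum_eq_zero fun i hi => hp i hi _ ?_
  exact le_antisymm (hx ▸ h.apply_proj_le_supSeminorm hi x) (apply_nonneg _ _)

lemma supSeminorm_sum_of_mem_iSup {κ : Type*} (g : ι → κ) {s : Finset κ} (hs : s.Nonempty)
    {y : κ → M} (hy : ∀ k ∈ s, y k ∈ ⨆ (i : ι) (_ : g i = k), V i) :
    h.supSeminorm S p (∑ k ∈ s, y k) = s.sup' hs fun k => h.supSeminorm S p (y k) := by
  have proj_sum_of_mem {i : ι} (hi : g i ∈ s) : h.proj i (∑ k ∈ s, y k) = h.proj i (y (g i)) := by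
    rw [map_sum, Finset.sum_eq_single_of_mem _ hi
      fun k hk hki => h.proj_eq_zero_of_mem_iSup (hy k hk) (Ne.symm hki)]
  refine le_antisymm (Seminorm.finset_sup_apply_le ?_ fun i hi => ?_)
    (Finset.sup'_le hs _ fun k hk => Seminorm.finset_sup_apply_le (apply_nonneg _ _)
      fun i hi => ?_)
  · exact Finset.le_sup'_of_le _ hs.choose_spec (apply_nonneg _ _)
  · rw [Seminorm.comp_apply]
    by_cases hgi : g i ∈ s
    · rw [proj_sum_of_mem hgi]
      exact (h.apply_proj_le_supSeminorm hi _).trans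
        (Finset.le_sup' (fun k => h.supSeminorm S p (y k)) hgi)
    · rw [map_sum, Finset.sum_eq_zero fun k hk => h.proj_eq_zero_of_mem_iSup (hy k hk)
        fun hik => hgi (hik ▸ hk), map_zero]
      exact Finset.le_sup'_of_le _ hs.choose_spec (apply_nonneg _ _)
  · rw [Seminorm.comp_apply]
    by_cases hgi : g i = k
    · subst hgi
      rw [← proj_sum_of_mem hk]
      exact h.apply_proj_le_supSeminorm hi _
    · rw [h.proj_eq_zero_of_mem_iSup (hy k hk) hgi, map_zero]
      exact apply_nonneg _ _

variable {f : Module.End 𝕜 M}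

lemma supSeminorm_map_le (hf : ∀ i, Set.MapsTo f (V i) (V i)) {r : ℝ} (hr : 0 ≤ r) {x : M}
    (hx : ∀ i ∈ S, p i (f (h.proj i x)) ≤ r * p i (h.proj i x)) :
    h.supSeminorm S p (f x) ≤ r * h.supSeminorm S p x :=
  Seminorm.finset_sup_apply_le (by positivity) fun i hi => by
    rw [Seminorm.comp_apply, ← LinearMap.comp_apply, h.proj_comp_of_mapsTo hf,
      LinearMap.comp_apply]
    exact (hx i hi).trans (mul_le_mul_of_nonneg_left (h.apply_proj_le_supSeminorm hi x) hr)

lemma le_supSeminorm_map (hf : ∀ i, Set.MapsTo f (V i) (V i)) {r : ℝ} {x : M}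
    (hx : ∀ i ∈ S, r * p i (h.proj i x) ≤ p i (f (h.proj i x))) :
    r * h.supSeminorm S p x ≤ h.supSeminorm S p (f x) := by
  rcases le_or_gt r 0 with hr | hr
  · exact (mul_nonpos_of_nonpos_of_nonneg hr (apply_nonneg _ _)).trans (apply_nonneg _ _)
  rw [← le_div_iff₀' hr]
  refine Seminorm.finset_sup_apply_le (by positivity) fun i hi => ?_
  rw [Seminorm.comp_apply, le_div_iff₀' hr]
  refine (hx i hi).trans ?_
  rw [← LinearMap.comp_apply, ← h.proj_comp_of_mapsTo hf, LinearMap.comp_apply]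
  exact h.apply_proj_le_supSeminorm hi _

end Seminorm

end DirectSum.IsInternal

namespace Module.End

variable {𝕜 E : Type*} [NormedField 𝕜] [AddCommGroup E] [Module 𝕜 E] [FiniteDimensional 𝕜 E]
  {f : Module.End 𝕜 E} {μ : 𝕜} {x : E}

lemma pow_apply_eq_zero_of_finrank_le (hx : x ∈ f.maxGenEigenspace μ) {k : ℕ}
    (hk : finrank 𝕜 E ≤ k) : ((f - μ • 1) ^ k) x = 0 := by
  rw [maxGenEigenspace_eq_genEigenspace_finrank, mem_genEigenspace_nat, LinearMap.mem_ker] at hx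
  rw [← Nat.sub_add_cancel hk, pow_add, mul_apply, hx, map_zero]

variable {c : Seminorm 𝕜 E} {δ : ℝ≥0}

lemma iterateSup_sub_smul_apply_le (hδ : δ ≠ 0) (hx : x ∈ f.maxGenEigenspace μ) :
    c.iterateSup (f - μ • 1) δ (finrank 𝕜 E + 1) ((f - μ • 1) x) ≤
      δ * c.iterateSup (f - μ • 1) δ (finrank 𝕜 E + 1) x :=
  Seminorm.iterateSup_apply_le hδ (pow_apply_eq_zero_of_finrank_le hx (Nat.le_succ _))

lemma iterateSup_sub_smul_map_eq (hc : IsNonarchimedean c) (hδ : δ ≠ 0) (hδμ : δ < ‖μ‖)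
    (hx : x ∈ f.maxGenEigenspace μ) :
    c.iterateSup (f - μ • 1) δ (finrank 𝕜 E + 1) (f x) =
      ‖μ‖ * c.iterateSup (f - μ • 1) δ (finrank 𝕜 E + 1) x := by
  have hfx : f x = μ • x + (f - μ • 1) x := by simp
  rw [hfx]
  exact Seminorm.apply_smul_add_eq (Seminorm.isNonarchimedean_iterateSup hc)
    (iterateSup_sub_smul_apply_le hδ hx) hδμ

end Module.End

lemma Finset.exists_pos_lt_and_forall_lt_norm {𝕜 : Type*} [NormedField 𝕜] (S : Finset 𝕜)
    {ε : ℝ} (hε : 0 < ε) : ∃ δ : ℝ≥0, 0 < δ ∧ δ < ε ∧ ∀ μ ∈ S, μ ≠ 0 → δ < ‖μ‖ := by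
  have hsmall : ∀ᶠ δ in 𝓝 (0 : ℝ), δ < ε ∧ ∀ μ ∈ S, μ ≠ 0 → δ < ‖μ‖ := by
    refine (eventually_lt_nhds hε).and ((eventually_all_finset S).2 fun μ _ => ?_)
    by_cases hμ : μ = 0
    · exact Eventually.of_forall fun _ h => absurd hμ h
    · exact (eventually_lt_nhds (norm_pos_iff.2 hμ)).mono fun _ h _ => h
  obtain ⟨δ, ⟨hδε, hδS⟩, hδ⟩ :=
    ((hsmall.filter_mono (nhdsWithin_le_nhds (s := Set.Ioi 0))).and self_mem_nhdsWithin).exists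
  lift δ to ℝ≥0 using le_of_lt hδ
  exact ⟨δ, by exact_mod_cast hδ, hδε, hδS⟩

theorem Module.End.exists_adapted_seminorm {L F : Type*} [NormedField L] [IsUltrametricDist L]
    [IsAlgClosed L] [AddCommGroup F] [Module L F] [FiniteDimensional L F] (β : Module.End L F)
    {ε : ℝ} (hε : 0 < ε) :
    ∃ p : Seminorm L F, IsNonarchimedean p ∧ (∀ y, p y = 0 → y = 0) ∧
      (∀ (s : Finset ℝ) (hs : s.Nonempty) (y : ℝ → F),
        (∀ ρ ∈ s, y ρ ∈ ⨆ (μ : L) (_ : ‖μ‖ = ρ), β.maxGenEigenspace μ) →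
        p (∑ ρ ∈ s, y ρ) = s.sup' hs fun ρ => p (y ρ)) ∧
      (∀ μ : L, μ ≠ 0 → ∀ y ∈ ⨆ (μ' : L) (_ : ‖μ'‖ = ‖μ‖), β.maxGenEigenspace μ',
        p (β y) = ‖μ‖ * p y) ∧
      ∃ b < ε, ∀ y, (∃ n : ℕ, (β ^ n) y = 0) → p (β y) ≤ b * p y := by
  classical
  have hV := DirectSum.isInternal_submodule_of_iSupIndep_of_iSup_eq_top
    β.independent_maxGenEigenspace β.iSup_maxGenEigenspace_eq_top
  obtain ⟨S, hS⟩ : ∃ S : Finset L, ∀ μ ∉ S, β.maxGenEigenspace μ = ⊥ :=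
    ⟨(WellFoundedGT.finite_ne_bot_of_iSupIndep β.independent_maxGenEigenspace).toFinset,
      by simp⟩
  have hβV μ : Set.MapsTo β (β.maxGenEigenspace μ) (β.maxGenEigenspace μ) :=
    mapsTo_maxGenEigenspace_of_comm (Commute.refl β) μ
  obtain ⟨δ, hδ, hδε, hδS⟩ := S.exists_pos_lt_and_forall_lt_norm hε
  let c := (finBasis L F).supSeminorm
  have hc : IsNonarchimedean c := (finBasis L F).isNonarchimedean_supSeminorm
  -- `finrank + 1` rather than `finrank`, so that the term `k = 0`, i.e. `c x`, is always present
  let B (μ : L) := c.iterateSup (β - μ • 1) δ (finrank L F + 1)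
  refine ⟨hV.supSeminorm S B,
    hV.isNonarchimedean_supSeminorm fun μ _ => Seminorm.isNonarchimedean_iterateSup hc,
    fun y => hV.eq_zero_of_supSeminorm_eq_zero hS fun μ _ x hx =>
      (finBasis L F).eq_zero_of_supSeminorm_eq_zero
        (le_antisymm (hx ▸ Seminorm.le_iterateSup (Nat.succ_pos _) x) (apply_nonneg _ _)),
    fun s hs y hy => hV.supSeminorm_sum_of_mem_iSup _ hs hy, fun μ hμ y hy => ?_,
    δ, hδε, fun y ⟨n, hn⟩ => ?_⟩
  · have hcomp μ' (hμ' : μ' ∈ S) : B μ' (β (hV.proj μ' y)) = ‖μ‖ * B μ' (hV.proj μ' y) := by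
      by_cases hnorm : ‖μ'‖ = ‖μ‖
      · rw [← hnorm]
        refine iterateSup_sub_smul_map_eq hc hδ.ne' (hδS μ' hμ' ?_) (hV.proj_mem μ' y)
        exact norm_ne_zero_iff.1 (hnorm ▸ norm_ne_zero_iff.2 hμ)
      · simp [hV.proj_eq_zero_of_mem_iSup hy hnorm]
    exact le_antisymm
      (hV.supSeminorm_map_le hβV (norm_nonneg μ) fun μ' hμ' => (hcomp μ' hμ').le)
      (hV.le_supSeminorm_map hβV fun μ' hμ' => (hcomp μ' hμ').ge)
  · have hy : y ∈ β.maxGenEigenspace 0 := (mem_maxGenEigenspace _ _ _).2 ⟨n, by simpa using hn⟩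
    refine hV.supSeminorm_map_le hβV δ.2 fun μ _ => ?_
    by_cases hμ : μ = 0
    · subst hμ
      simpa [B] using iterateSup_sub_smul_apply_le (c := c) hδ.ne' (hV.proj_mem 0 y)
    · simp [hV.proj_of_mem_ne hy (Ne.symm hμ)]

lemma Seminorm.isUltraNorm_comp {K L E F : Type*} [NormedField K] [NormedField L] [Algebra K L]
    [AddCommGroup E] [Module K E] [AddCommGroup F] [Module L F] [Module K F]
    [IsScalarTower K L F] (hK : ∀ c : K, ‖algebraMap K L c‖ = ‖c‖) {p : Seminorm L F}
    (hp : IsNonarchimedean p) (hp0 : ∀ y, p y = 0 → y = 0) {f : E →ₗ[K] F}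
    (hf : Function.Injective f) : IsUltraNorm K fun x => p (f x) := by
  refine ⟨fun x => apply_nonneg _ _, fun x => ⟨fun hx => hf ?_, ?_⟩, fun c x => ?_,
    fun x y => ?_⟩
  · rw [hp0 _ hx, map_zero]
  · rintro rfl
    simp
  · change p (f (c • x)) = ‖c‖ * p (f x)
    rw [map_smul, ← algebraMap_smul L, map_smul_eq_mul, hK]
  · change p (f (x + y)) ≤ max (p (f x)) (p (f y))
    rw [map_add]
    exact hp _ _

theorem exists_adapted_norm_general
    {K : Type*} [NontriviallyNormedField K] [IsUltrametricDist K]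
    {E : Type*} [AddCommGroup E] [Module K E] [FiniteDimensional K E]
    (α : E →ₗ[K] E)
    {Kbar : Type*} [Field Kbar] [Algebra K Kbar] [IsAlgClosure K Kbar]
    (v : AbsoluteValue Kbar ℝ) (hv : ∀ x : K, v (algebraMap K Kbar x) = ‖x‖)
    {ε : ℝ} (hε : 0 < ε) :
    ∃ N : E → ℝ, IsAdaptedNorm α v N ∧
      ∃ b, b < ε ∧ ∀ x : E, (∃ n : ℕ, (α ^ n) x = 0) → N (α x) ≤ b * N x := by
  -- now `‖μ‖ = v μ` by definition, so `eRho α Kbar v ρ` is the preimage under `1 ⊗ ·` of the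
  -- eigenspace sums in `Module.End.exists_adapted_seminorm`
  let : NormedField Kbar := v.toNormedField
  have : IsAlgClosed Kbar := IsAlgClosure.isAlgClosed K
  have : IsUltrametricDist Kbar :=
    IsUltrametricDist.isUltrametricDist_of_forall_norm_natCast_le_one fun n => by
      rw [← map_natCast (algebraMap K Kbar) n]
      exact (hv n).trans_le (IsUltrametricDist.norm_natCast_le_one K n)
  obtain ⟨p, hp, hp0, hsum, hscale, b, hb, hnil⟩ :=
    Module.End.exists_adapted_seminorm (α.baseChange Kbar) hε
  let ι := TensorProduct.mk K Kbar E 1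
  have hια x : α.baseChange Kbar (ι x) = ι (α x) := LinearMap.baseChange_tmul _ _ _
  refine ⟨fun x => p (ι x), ⟨Seminorm.isUltraNorm_comp hv hp hp0
    (Module.Flat.tensorProduct_mk_injective K E Kbar), fun s hs x _ hx => ?_,
    fun ρ ⟨μ, _, hμρ⟩ hρ x hx => ?_⟩, b, hb, fun x ⟨n, hn⟩ => ?_⟩
  · simpa only [map_sum] using hsum s hs (fun ρ => ι (x ρ)) hx
  · subst hμρ
    change p (ι (α x)) = v μ * p (ι x)
    rw [← hια]
    exact hscale μ (v.ne_zero_iff.1 hρ) (ι x) hx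
  · simpa only [hια] using hnil (ι x) ⟨n, by simp [ι, ← LinearMap.baseChange_pow, hn]⟩

/-- `E` admits a norm adapted to `α` with respect to which the restriction
of `α` to `E₀ = {x : α^n x = 0 for some n}` has operator norm `< ε`. -/
theorem exists_adapted_norm
    {K : Type*} [NontriviallyNormedField K] [IsUltrametricDist K] [CompleteSpace K]
    {E : Type*} [AddCommGroup E] [Module K E] [FiniteDimensional K E]
    (α : E →ₗ[K] E)
    {Kbar : Type*} [Field Kbar] [Algebra K Kbar] [IsAlgClosure K Kbar]
    (v : AbsoluteValue Kbar ℝ) (hv : ∀ x : K, v (algebraMap K Kbar x) = ‖x‖)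
    {ε : ℝ} (hε : 0 < ε) :
    ∃ N : E → ℝ, IsAdaptedNorm α v N ∧
      ∃ b, b < ε ∧ ∀ x : E, (∃ n : ℕ, (α ^ n) x = 0) → N (α x) ≤ b * N x :=
  exists_adapted_norm_general α v hv hε
end

section
/- Let E be an ultrametric Banach space over a complete ultrametric field K, U ⊆ E open, f : U → E analytic, and p ∈ U a fixed point of f such that α := f'(p) is a bicontinuous linear automorphism of E. Then the following are equivalent: (a) E admits a centre-stable subspace (with a = 1) with respect to α, and each neighbourhood P of p in U contains a neighbourhood Q of p such that f(Q) ⊆ Q; (b) there exists an ultrametric norm on E defining its topology such that the operator norm of α with respect to it is ≤ 1. -/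
/-!
Write `f (p + h) = p + α h + R h` with `R h = o(h)`, so that `N (R h) ≤ N h` for small `h`.
If `α` does not increase `N`, the ultrametric inequality makes every small `N`-ball around
`p` invariant under `f`. Conversely, with a splitting
`E = E_cs ⊕ E_u`, the cone `{x + y | N x ≤ N y}` is mapped into itself by `h ↦ α h + R h`,
and there `N` grows at least by the expansion factor `b > 1` of `α` on `E_u`. So an orbit
starting at `p + y` with `y ∈ E_u \ {0}` leaves every bounded neighbourhood of `p`, which
forces `E_u = 0`, i.e. `α` does not increase `N` on `E = E_cs`.
-/

open Filter Topology

/-- The norm `N` defines the canonical topology of `E`, i.e. it is equivalent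
to the ambient norm. -/
def DefinesTopology {E : Type*} [NormedAddCommGroup E] (N : E → ℝ) : Prop :=
  ∃ c > 0, ∃ C > 0, ∀ x : E, c * ‖x‖ ≤ N x ∧ N x ≤ C * ‖x‖

open Set

namespace IsUltraNorm

variable {K : Type*} [NormedField K] {E : Type*} [AddCommGroup E] [Module K E] {N : E → ℝ}

theorem nonneg (hN : IsUltraNorm K N) (x : E) : 0 ≤ N x := hN.1 x

theorem map_zero (hN : IsUltraNorm K N) : N 0 = 0 := (hN.2.1 0).2 rfl

theorem map_add_le (hN : IsUltraNorm K N) (x y : E) : N (x + y) ≤ max (N x) (N y) :=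
  hN.2.2.2 x y

theorem map_neg (hN : IsUltraNorm K N) (x : E) : N (-x) = N x := by
  simpa using hN.2.2.1 (-1) x

theorem map_add_eq_left (hN : IsUltraNorm K N) {x y : E} (hlt : N y < N x) :
    N (x + y) = N x := by
  refine le_antisymm ((hN.map_add_le x y).trans (max_le le_rfl hlt.le)) ?_
  have h := hN.map_add_le (x + y) (-y)
  rw [add_neg_cancel_right, hN.map_neg] at h
  exact (le_max_iff.1 h).resolve_right (not_le.2 hlt)

end IsUltraNorm

namespace DefinesTopology

variable {K : Type*} [NontriviallyNormedField K] {E : Type*} [NormedAddCommGroup E]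
  [NormedSpace K E] {N : E → ℝ}

theorem hasBasis_nhds (hN : DefinesTopology N) (p : E) :
    (𝓝 p).HasBasis (fun r : ℝ => 0 < r) fun r => {x | N (x - p) ≤ r} := by
  obtain ⟨c, hc, C, hC, hcC⟩ := hN
  refine Metric.nhds_basis_closedBall.to_hasBasis (fun ε hε => ⟨c * ε, by positivity, ?_⟩)
    fun r hr => ⟨r / C, by positivity, ?_⟩
  · intro x hx
    rw [Metric.mem_closedBall, dist_eq_norm]
    exact le_of_mul_le_mul_left ((hcC _).1.trans hx) hc
  · intro x hx
    rw [Metric.mem_closedBall, dist_eq_norm, le_div_iff₀ hC, mul_comm] at hx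
    exact (hcC _).2.trans hx

theorem eventually_remainder_le (hN : DefinesTopology N) {f : E → E} {A : E →L[K] E} {p : E}
    (hf : HasFDerivAt f A p) {ε : ℝ} (hε : 0 < ε) :
    ∀ᶠ x in 𝓝 p, N (f x - f p - A (x - p)) ≤ ε * N (x - p) := by
  obtain ⟨c, hc, C, hC, hcC⟩ := hN
  filter_upwards [hf.isLittleO.def (by positivity : 0 < ε * c / C)] with x hx
  calc N (f x - f p - A (x - p)) ≤ C * ‖f x - f p - A (x - p)‖ := (hcC _).2
    _ ≤ C * (ε * c / C * ‖x - p‖) := by gcongr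
    _ = ε * (c * ‖x - p‖) := by field_simp
    _ ≤ ε * N (x - p) := by gcongr; exact (hcC _).1

end DefinesTopology

theorem exists_mapsTo_nhds_subset_of_map_le {K : Type*} [NontriviallyNormedField K]
    {E : Type*} [NormedAddCommGroup E] [NormedSpace K E] {N : E → ℝ}
    (hN : IsUltraNorm K N) (hNtop : DefinesTopology N) {f : E → E} {A : E →L[K] E} {p : E}
    (hf : HasFDerivAt f A p) (hfp : f p = p) (hA : ∀ x, N (A x) ≤ N x)
    {P : Set E} (hP : P ∈ 𝓝 p) : ∃ Q, Q ⊆ P ∧ Q ∈ 𝓝 p ∧ MapsTo f Q Q := by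
  obtain ⟨r, hr, hrP⟩ := (hNtop.hasBasis_nhds p).mem_iff.1
    (inter_mem hP (hNtop.eventually_remainder_le hf one_pos))
  refine ⟨_, fun x hx => (hrP hx).1, (hNtop.hasBasis_nhds p).mem_of_mem hr, fun x hx => ?_⟩
  have hrem : N (f x - f p - A (x - p)) ≤ 1 * N (x - p) := (hrP hx).2
  rw [hfp, one_mul] at hrem
  calc N (f x - p) = N (A (x - p) + (f x - p - A (x - p))) := by rw [add_sub_cancel]
    _ ≤ max (N (A (x - p))) (N (f x - p - A (x - p))) := hN.map_add_le _ _
    _ ≤ N (x - p) := max_le (hA _) hrem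
    _ ≤ r := hx

theorem Submodule.exists_ne_zero_add_mem_of_ne_bot {K : Type*} [NontriviallyNormedField K]
    {E : Type*} [NormedAddCommGroup E] [NormedSpace K E] {V : Submodule K E} (hV : V ≠ ⊥)
    {p : E} {Q : Set E} (hQ : Q ∈ 𝓝 p) : ∃ y ∈ V, y ≠ 0 ∧ p + y ∈ Q := by
  obtain ⟨y, hyV, hy⟩ := V.exists_mem_ne_zero_of_ne_bot hV
  have hline : Continuous fun t : K => p + t • y := by fun_prop
  have hev : ∀ᶠ t in 𝓝[≠] (0 : K), p + t • y ∈ Q :=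
    nhdsWithin_le_nhds ((hline.tendsto' 0 p (by simp)).eventually_mem hQ)
  obtain ⟨t, htQ, ht⟩ := (hev.and self_mem_nhdsWithin).exists
  exact ⟨t • y, V.smul_mem t hyV, smul_ne_zero ht hy, htQ⟩

/-- `Ecs` is a centre-stable subspace for `α` with `a = 1`; the bound `‖(α|Eu)⁻¹‖ < 1` on the
unstable complement `Eu` appears as the expansion factor `b > 1`. -/
structure IsCentreStableSplitting {K : Type*} [NormedField K] {E : Type*} [AddCommGroup E]
    [Module K E] {F : Type*} [FunLike F E E] (N : E → ℝ) (α : F) (Ecs Eu : Submodule K E)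
    (b : ℝ) : Prop where
  mapsTo_cs : ∀ x ∈ Ecs, α x ∈ Ecs
  mapsTo_u : ∀ y ∈ Eu, α y ∈ Eu
  isCompl : IsCompl Ecs Eu
  map_add_eq_max : ∀ x ∈ Ecs, ∀ y ∈ Eu, N (x + y) = max (N x) (N y)
  map_apply_cs_le : ∀ x ∈ Ecs, N (α x) ≤ N x
  mul_le_map_apply_u : ∀ y ∈ Eu, b * N y ≤ N (α y)
  one_lt : 1 < b

def unstableCone {K : Type*} [NormedField K] {E : Type*} [AddCommGroup E] [Module K E]
    (N : E → ℝ) (Ecs Eu : Submodule K E) : Set E :=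
  {h | ∃ x ∈ Ecs, ∃ y ∈ Eu, x + y = h ∧ N x ≤ N y}

theorem mem_unstableCone_of_mem {K : Type*} [NormedField K] {E : Type*} [AddCommGroup E]
    [Module K E] {N : E → ℝ} (hN : IsUltraNorm K N) {Ecs Eu : Submodule K E} {y : E}
    (hy : y ∈ Eu) : y ∈ unstableCone N Ecs Eu :=
  ⟨0, Ecs.zero_mem, y, hy, zero_add y, hN.map_zero ▸ hN.nonneg y⟩

namespace IsCentreStableSplitting

variable {K : Type*} [NormedField K] {E : Type*} [AddCommGroup E] [Module K E]
  {F : Type*} [FunLike F E E] [AddHomClass F E E]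
  {N : E → ℝ} {α : F} {Ecs Eu : Submodule K E} {b : ℝ}

theorem add_mem_unstableCone (hS : IsCentreStableSplitting N α Ecs Eu b)
    (hN : IsUltraNorm K N) {h r : E} (hh : h ∈ unstableCone N Ecs Eu) (hr : N r ≤ N h) :
    α h + r ∈ unstableCone N Ecs Eu ∧ b * N h ≤ N (α h + r) := by
  obtain ⟨x, hx, y, hy, rfl, hxy⟩ := hh
  have hNh : N (x + y) = N y := by rw [hS.map_add_eq_max x hx y hy, max_eq_right hxy]
  obtain ⟨rc, hrc, ru, hru, rfl⟩ : ∃ rc ∈ Ecs, ∃ ru ∈ Eu, rc + ru = r :=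
    Submodule.mem_sup.1 (hS.isCompl.sup_eq_top ▸ Submodule.mem_top)
  rw [hNh, hS.map_add_eq_max rc hrc ru hru, max_le_iff] at hr
  have hgrow : b * N y ≤ N (α y + ru) := by
    rcases (hN.nonneg y).eq_or_lt with hy0 | hy0
    · rw [← hy0, mul_zero]
      exact hN.nonneg _
    · have hlt : N ru < N (α y) :=
        hr.2.trans_lt ((lt_mul_of_one_lt_left hy0 hS.one_lt).trans_le
          (hS.mul_le_map_apply_u y hy))
      rw [hN.map_add_eq_left hlt]
      exact hS.mul_le_map_apply_u y hy
  have hcs : α x + rc ∈ Ecs := add_mem (hS.mapsTo_cs x hx) hrc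
  have hu : α y + ru ∈ Eu := add_mem (hS.mapsTo_u y hy) hru
  have hsplit : α (x + y) + (rc + ru) = (α x + rc) + (α y + ru) := by
    rw [map_add]
    abel
  refine ⟨⟨α x + rc, hcs, α y + ru, hu, hsplit.symm, ?_⟩, ?_⟩
  · calc N (α x + rc) ≤ max (N (α x)) (N rc) := hN.map_add_le _ _
      _ ≤ N y := max_le ((hS.map_apply_cs_le x hx).trans hxy) hr.1
      _ ≤ b * N y := le_mul_of_one_le_left (hN.nonneg y) hS.one_lt.le
      _ ≤ N (α y + ru) := hgrow
  · rw [hNh, hsplit, hS.map_add_eq_max _ hcs _ hu]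
    exact hgrow.trans (le_max_right _ _)

theorem iterate_sub_mem_unstableCone (hS : IsCentreStableSplitting N α Ecs Eu b)
    (hN : IsUltraNorm K N) {f : E → E} {p x : E} {Q : Set E} (hfQ : MapsTo f Q Q)
    (hrem : ∀ z ∈ Q, N (f z - p - α (z - p)) ≤ N (z - p)) (hx : x ∈ Q)
    (hxp : x - p ∈ unstableCone N Ecs Eu) :
    ∀ n : ℕ, f^[n] x - p ∈ unstableCone N Ecs Eu ∧ b ^ n * N (x - p) ≤ N (f^[n] x - p)
  | 0 => by simpa using hxp
  | n + 1 => by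
    obtain ⟨hcone, hgrow⟩ := iterate_sub_mem_unstableCone hS hN hfQ hrem hx hxp n
    have hstep := hS.add_mem_unstableCone hN hcone (hrem _ (hfQ.iterate n hx))
    rw [add_sub_cancel] at hstep
    rw [Function.iterate_succ_apply', pow_succ', mul_assoc]
    exact ⟨hstep.1, (mul_le_mul_of_nonneg_left hgrow (zero_le_one.trans hS.one_lt.le)).trans
      hstep.2⟩

end IsCentreStableSplitting

theorem IsCentreStableSplitting.unstable_eq_bot_of_mapsTo {K : Type*} [NontriviallyNormedField K]
    {E : Type*} [NormedAddCommGroup E] [NormedSpace K E] {F : Type*} [FunLike F E E]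
    [AddHomClass F E E] {N : E → ℝ} {α : F} {Ecs Eu : Submodule K E} {b : ℝ}
    (hS : IsCentreStableSplitting N α Ecs Eu b) (hN : IsUltraNorm K N)
    {f : E → E} {p : E} {Q : Set E} {ρ : ℝ} (hQ : Q ∈ 𝓝 p) (hfQ : MapsTo f Q Q)
    (hQρ : ∀ x ∈ Q, N (x - p) ≤ ρ)
    (hrem : ∀ z ∈ Q, N (f z - p - α (z - p)) ≤ N (z - p)) : Eu = ⊥ := by
  by_contra hEu
  obtain ⟨y, hyEu, hy0, hyQ⟩ := Submodule.exists_ne_zero_add_mem_of_ne_bot hEu hQ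
  have hNy : 0 < N y := (hN.nonneg y).lt_of_ne fun h => hy0 ((hN.2.1 y).1 h.symm)
  obtain ⟨n, hn⟩ := pow_unbounded_of_one_lt (ρ / N y) hS.one_lt
  have hgrow := (hS.iterate_sub_mem_unstableCone hN hfQ hrem hyQ
    (by simpa using mem_unstableCone_of_mem hN hyEu) n).2
  rw [add_sub_cancel_left] at hgrow
  have hbound := hQρ _ (hfQ.iterate n hyQ)
  rw [div_lt_iff₀ hNy] at hn
  linarith

theorem centre_stable_and_invariant_nbhds_iff_opNorm_le_one_general
    {K : Type*} [NontriviallyNormedField K]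
    {E : Type*} [NormedAddCommGroup E] [NormedSpace K E]
    {U : Set E} (hU : IsOpen U) {f : E → E}
    {p : E} (hp : p ∈ U) (hfp : f p = p)
    (α : E ≃L[K] E) (hα : HasFDerivAt f (α : E →L[K] E) p) :
    ((∃ (Ecs Eu : Submodule K E) (N : E → ℝ),
        (∀ x ∈ Ecs, α x ∈ Ecs) ∧ (∀ x ∈ Eu, α x ∈ Eu) ∧
        IsCompl Ecs Eu ∧
        Set.BijOn ⇑α (Eu : Set E) (Eu : Set E) ∧
        IsUltraNorm K N ∧ DefinesTopology N ∧
        (∀ x ∈ Ecs, ∀ y ∈ Eu, N (x + y) = max (N x) (N y)) ∧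
        (∀ x ∈ Ecs, N (α x) ≤ N x) ∧
        (∃ b, 1 < b ∧ ∀ y ∈ Eu, b * N y ≤ N (α y))) ∧
      (∀ P, P ⊆ U → P ∈ 𝓝 p → ∃ Q, Q ⊆ P ∧ Q ∈ 𝓝 p ∧ Set.MapsTo f Q Q))
    ↔ ∃ N : E → ℝ, IsUltraNorm K N ∧ DefinesTopology N ∧ ∀ x : E, N (α x) ≤ N x := by
  constructor
  · rintro ⟨⟨Ecs, Eu, N, hcs, hu, hcompl, -, hN, hNtop, hmax, hcsle, b, hb, hexp⟩, hinv⟩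
    have hS : IsCentreStableSplitting N α Ecs Eu b := ⟨hcs, hu, hcompl, hmax, hcsle, hexp, hb⟩
    obtain ⟨ρ, hρ, hρU⟩ := (hNtop.hasBasis_nhds p).mem_iff.1
      (inter_mem (hU.mem_nhds hp) (hNtop.eventually_remainder_le hα one_pos))
    obtain ⟨Q, hQρ, hQ, hfQ⟩ :=
      hinv _ (fun x hx => (hρU hx).1) ((hNtop.hasBasis_nhds p).mem_of_mem hρ)
    have hEu : Eu = ⊥ := hS.unstable_eq_bot_of_mapsTo hN hQ hfQ hQρ fun z hz => by
      simpa [hfp] using (hρU (hQρ hz)).2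
    rw [hEu] at hcompl
    exact ⟨N, hN, hNtop, fun x => hcsle x (eq_top_of_isCompl_bot hcompl ▸ Submodule.mem_top)⟩
  · rintro ⟨N, hN, hNtop, hNα⟩
    refine ⟨⟨⊤, ⊥, N, fun _ _ => Submodule.mem_top, ?_, isCompl_top_bot, ?_, hN, hNtop, ?_,
      fun x _ => hNα x, 2, one_lt_two, ?_⟩,
      fun P _ hP => exists_mapsTo_nhds_subset_of_map_le hN hNtop hα hfp hNα hP⟩
    · simp
    · simp
    · simp [hN.map_zero, hN.nonneg]
    · simp [hN.map_zero]

/-- For an analytic map `f` on an open subset of an ultrametric Banach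
space, with fixed point `p` whose differential `α = f'(p)` is a bicontinuous automorphism:
`E` has a centre-stable subspace (with `a = 1`) for `α` and every neighbourhood of `p`
contains an `f`-invariant neighbourhood of `p`, if and only if `α` has operator norm `≤ 1`
with respect to some ultrametric norm defining the topology of `E`. -/
theorem centre_stable_and_invariant_nbhds_iff_opNorm_le_one
    {K : Type*} [NontriviallyNormedField K] [IsUltrametricDist K] [CompleteSpace K]
    {E : Type*} [NormedAddCommGroup E] [NormedSpace K E] [IsUltrametricDist E]
    [CompleteSpace E]
    {U : Set E} (hU : IsOpen U) {f : E → E} (hf : AnalyticOnNhd K f U)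
    {p : E} (hp : p ∈ U) (hfp : f p = p)
    (α : E ≃L[K] E) (hα : HasFDerivAt f (α : E →L[K] E) p) :
    ((∃ (Ecs Eu : Submodule K E) (N : E → ℝ),
        (∀ x ∈ Ecs, α x ∈ Ecs) ∧ (∀ x ∈ Eu, α x ∈ Eu) ∧
        IsCompl Ecs Eu ∧
        Set.BijOn ⇑α (Eu : Set E) (Eu : Set E) ∧
        IsUltraNorm K N ∧ DefinesTopology N ∧
        (∀ x ∈ Ecs, ∀ y ∈ Eu, N (x + y) = max (N x) (N y)) ∧
        (∀ x ∈ Ecs, N (α x) ≤ N x) ∧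
        (∃ b, 1 < b ∧ ∀ y ∈ Eu, b * N y ≤ N (α y))) ∧
      (∀ P, P ⊆ U → P ∈ 𝓝 p → ∃ Q, Q ⊆ P ∧ Q ∈ 𝓝 p ∧ Set.MapsTo f Q Q))
    ↔ ∃ N : E → ℝ, IsUltraNorm K N ∧ DefinesTopology N ∧ ∀ x : E, N (α x) ≤ N x :=
  centre_stable_and_invariant_nbhds_iff_opNorm_le_one_general hU hp hfp α hα
end

section
/- Let E be a finite-dimensional normed vector space over a complete ultrametric field K, f : E → E a bijective analytic map with analytic inverse, p a fixed point of f, and α := f'(p). If a ∈ (0,1] and (0,a] ∩ R(α) = ∅, then W_a^s(f,p) = {p}. -/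
open Filter Topology

open scoped TensorProduct

/-- The `a`-stable set `W_a^s(f,p)`: points whose forward orbit converges to `p` with
`a^{-n}·‖f^[n] x − p‖ → 0`. -/
def WStable {E : Type*} [NormedAddCommGroup E] (f : E → E) (p : E) (a : ℝ) : Set E :=
  {x | Tendsto (fun n => f^[n] x) atTop (𝓝 p) ∧
    Tendsto (fun n => (a ^ n)⁻¹ * ‖f^[n] x - p‖) atTop (𝓝 (0 : ℝ))}

/-!
Let `B` be the derivative of `f⁻¹` at `p`, so `B = α⁻¹`. The hypothesis on `R(α)` says that
every eigenvalue of `B` has absolute value `< a⁻¹`, so all of them are `≤ w` for some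
`w < a⁻¹`.
Over an ultrametric field, Vieta's formulas bound the `k`-th coefficient of the characteristic
polynomial of `B` by `w ^ (n - k)`, and Cayley–Hamilton turns this into `‖B ^ m‖ ≤ C w ^ m`.
Hence `N x = sup_m ‖B ^ m x‖ / w ^ m` is equivalent to `‖·‖`, and `α` expands it by the
factor `w⁻¹ > a`; since `f` is `α` up to `o(‖x - p‖)`, `f` still expands `N (· - p)` by the
factor `a` near `p`. So an orbit with `‖f^[n] x - p‖ = o(a ^ n)` reaches `p` after finitely
many steps, and `x = p` because `f` is injective.
-/

open Polynomial

theorem AbsoluteValue.isNonarchimedean_of_algebraMap_eq_norm_s15 {K L : Type*} [NormedField K]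
    [IsUltrametricDist K] [Field L] [Algebra K L] {v : AbsoluteValue L ℝ}
    (hv : ∀ x : K, v (algebraMap K L x) = ‖x‖) : IsNonarchimedean v := by
  let _ := v.toNormedField
  have : IsUltrametricDist L :=
    IsUltrametricDist.isUltrametricDist_of_forall_norm_natCast_le_one fun n => by
      change v (n : L) ≤ 1
      rw [← map_natCast (algebraMap K L), hv]
      exact IsUltrametricDist.norm_natCast_le_one K n
  exact IsUltrametricDist.isNonarchimedean_norm

theorem Polynomial.Monic.abv_coeff_le_pow_of_roots_le {L : Type*} [Field L]
    {v : AbsoluteValue L ℝ} (hv : IsNonarchimedean v) {P : L[X]} (hP : P.Monic)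
    (hcard : P.roots.card = P.natDegree) {w : ℝ} (hw : ∀ μ ∈ P.roots, v μ ≤ w) {k : ℕ}
    (hk : k ≤ P.natDegree) : v (P.coeff k) ≤ w ^ (P.natDegree - k) := by
  obtain ⟨t, ht_card, ht_sub, ht_le⟩ := hv.multiset_powerset_image_add P.roots k
  rw [coeff_eq_esymm_roots_of_card hcard hk, hP.leadingCoeff, one_mul, map_mul, map_pow,
    v.map_neg, map_one, one_pow, one_mul, Multiset.esymm, ← hcard]
  calc _ ≤ v t.prod := ht_le
    _ = (t.map v).prod := map_multiset_prod v t
    _ ≤ w ^ t.card := Multiset.prod_map_le_pow_card (fun _ _ => v.nonneg _)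
        fun μ hμ => hw μ (ht_sub μ hμ)
    _ = _ := by rw [ht_card]

theorem IsUltrametricDist.norm_le_of_linear_recurrence {K F : Type*} [NormedField K]
    [SeminormedAddCommGroup F] [IsUltrametricDist F] [NormedSpace K F] {d : ℕ} {c : ℕ → K}
    {w C : ℝ} (hw : 0 ≤ w) (hC : 0 ≤ C) (hc : ∀ i < d, ‖c i‖ ≤ w ^ (d - i)) {y : ℕ → F}
    (hy : ∀ m, y (m + d) = -∑ i ∈ Finset.range d, c i • y (m + i))
    (hinit : ∀ i < d, ‖y i‖ ≤ C * w ^ i) (m : ℕ) : ‖y m‖ ≤ C * w ^ m := by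
  induction m using Nat.strong_induction_on with
  | _ m ih =>
  rcases lt_or_ge m d with hm | hm
  · exact hinit m hm
  obtain ⟨m, rfl⟩ := Nat.exists_eq_add_of_le' hm
  rw [hy, norm_neg]
  refine norm_sum_le_of_forall_le_of_nonneg (by positivity) fun i hi => ?_
  have hi : i < d := Finset.mem_range.mp hi
  calc ‖c i • y (m + i)‖ = ‖c i‖ * ‖y (m + i)‖ := norm_smul _ _
    _ ≤ w ^ (d - i) * (C * w ^ (m + i)) :=
        mul_le_mul (hc i hi) (ih _ (by omega)) (norm_nonneg _) (by positivity)
    _ = C * w ^ (m + d) := by rw [mul_left_comm, ← pow_add]; congr 2; omega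

theorem Function.LeftInverse.leftInverse_of_hasFDerivAt {K E F : Type*}
    [NontriviallyNormedField K] [NormedAddCommGroup E] [NormedSpace K E] [NormedAddCommGroup F]
    [NormedSpace K F] {f : E → F} {g : F → E} {f' : E →L[K] F} {g' : F →L[K] E} {x : E}
    (hgf : Function.LeftInverse g f) (hf : HasFDerivAt f f' x) (hg : HasFDerivAt g g' (f x)) :
    Function.LeftInverse g' f' := by
  have hid : HasFDerivAt (g ∘ f) (ContinuousLinearMap.id K E) x := by
    rw [hgf.comp_eq_id]; exact hasFDerivAt_id x
  exact fun y => congrArg (· y) ((hg.comp x hf).unique hid)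

section Growth

variable {K E : Type*} [NontriviallyNormedField K] [IsUltrametricDist K] [CompleteSpace K]
  [NormedAddCommGroup E] [NormedSpace K E] [FiniteDimensional K E]

theorem LinearMap.exists_norm_pow_apply_le_of_aeval_eq_zero (B : E →ₗ[K] E) {P : K[X]}
    (hP : P.Monic) (hPB : aeval B P = 0) {w : ℝ} (hw : 0 < w)
    (hcoeff : ∀ k < P.natDegree, ‖P.coeff k‖ ≤ w ^ (P.natDegree - k)) :
    ∃ C, 0 ≤ C ∧ ∀ m x, ‖(B ^ m) x‖ ≤ C * w ^ m * ‖x‖ := by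
  set d := P.natDegree
  have hBd : B ^ d = -∑ i ∈ Finset.range d, P.coeff i • B ^ i := by
    rw [eq_neg_iff_add_eq_zero, add_comm, ← hPB, aeval_eq_sum_range, Finset.sum_range_succ,
      hP.coeff_natDegree, one_smul]
  let φ := (Module.finBasis K E).equivFunL
  let ψ : (Fin (Module.finrank K E) → K) →L[K] E := φ.symm
  let T : ℕ → E →L[K] (Fin (Module.finrank K E) → K) := fun k =>
    φ.toContinuousLinearMap.comp (LinearMap.toContinuousLinearMap (B ^ k))
  set C₀ := ∑ k ∈ Finset.range d, ‖T k‖ / w ^ k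
  refine ⟨‖ψ‖ * C₀, by positivity, fun m x => ?_⟩
  have hrec : ∀ m, φ ((B ^ (m + d)) x) =
      -∑ i ∈ Finset.range d, P.coeff i • φ ((B ^ (m + i)) x) := fun m => by
    simp [add_comm m, pow_add, hBd, Finset.sum_apply, map_sum]
  have hinit : ∀ i < d, ‖φ ((B ^ i) x)‖ ≤ C₀ * ‖x‖ * w ^ i := fun i hi =>
    calc ‖φ ((B ^ i) x)‖ = ‖T i x‖ := rfl
      _ ≤ ‖T i‖ / w ^ i * w ^ i * ‖x‖ := by
          rw [div_mul_cancel₀ _ (pow_pos hw i).ne']; exact (T i).le_opNorm x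
      _ ≤ C₀ * ‖x‖ * w ^ i := by
          rw [mul_right_comm]
          gcongr
          exact Finset.single_le_sum (f := fun k => ‖T k‖ / w ^ k) (fun _ _ => by positivity)
            (Finset.mem_range.2 hi)
  calc ‖(B ^ m) x‖ = ‖ψ (φ ((B ^ m) x))‖ := by simp [ψ]
    _ ≤ ‖ψ‖ * (C₀ * ‖x‖ * w ^ m) := (ψ.le_opNorm _).trans <| by
        gcongr
        exact IsUltrametricDist.norm_le_of_linear_recurrence hw.le (by positivity) hcoeff hrec
          hinit m
    _ = _ := by ring

theorem LinearMap.exists_norm_pow_apply_le_of_roots_charpoly {Kbar : Type*} [Field Kbar]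
    [Algebra K Kbar] [IsAlgClosed Kbar] {v : AbsoluteValue Kbar ℝ}
    (hv : ∀ x : K, v (algebraMap K Kbar x) = ‖x‖) (B : E →ₗ[K] E) {w : ℝ} (hw : 0 < w)
    (hroots : ∀ μ ∈ (B.charpoly.map (algebraMap K Kbar)).roots, v μ ≤ w) :
    ∃ C, 0 ≤ C ∧ ∀ m x, ‖(B ^ m) x‖ ≤ C * w ^ m * ‖x‖ := by
  refine B.exists_norm_pow_apply_le_of_aeval_eq_zero B.charpoly_monic B.aeval_self_charpoly hw
    fun k hk => ?_
  have := (B.charpoly_monic.map (algebraMap K Kbar)).abv_coeff_le_pow_of_roots_le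
    (v.isNonarchimedean_of_algebraMap_eq_norm_s15 hv) IsAlgClosed.card_roots_eq_natDegree hroots
    (k := k) (by rw [natDegree_map]; exact hk.le)
  rwa [coeff_map, hv, natDegree_map] at this

end Growth

namespace Module.End

variable {L V : Type*} [Field L] [AddCommGroup V] [Module L V] {α β : End L V} {μ : L}

theorem HasEigenvalue.ne_zero_of_leftInverse (h : Function.LeftInverse α β)
    (hμ : β.HasEigenvalue μ) : μ ≠ 0 := by
  rintro rfl
  obtain ⟨x, hx, hx0⟩ := hμ.exists_hasEigenvector
  have hβx : β x = 0 := by simpa using mem_eigenspace_iff.mp hx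
  exact hx0 (by simpa [hβx] using (h x).symm)

theorem HasEigenvalue.inv_of_leftInverse (h : Function.LeftInverse α β)
    (hμ : β.HasEigenvalue μ) : α.HasEigenvalue μ⁻¹ := by
  obtain ⟨x, hx, hx0⟩ := hμ.exists_hasEigenvector
  have hαx : μ • α x = x := by rw [← map_smul, ← mem_eigenspace_iff.mp hx, h x]
  refine hasEigenvalue_of_hasEigenvector ⟨mem_eigenspace_iff.mpr ?_, hx0⟩
  calc α x = μ⁻¹ • μ • α x := by
        rw [smul_smul, inv_mul_cancel₀ (hμ.ne_zero_of_leftInverse h), one_smul]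
    _ = μ⁻¹ • x := by rw [hαx]

end Module.End

theorem abv_lt_inv_of_isRoot_charpoly {K E : Type*} [NontriviallyNormedField K] [AddCommGroup E]
    [Module K E] [FiniteDimensional K E] {Kbar : Type*} [Field Kbar] [Algebra K Kbar]
    {v : AbsoluteValue Kbar ℝ} {α B : E →ₗ[K] E} (hαB : Function.LeftInverse α B) {a : ℝ}
    (ha : 0 < a) (hR : ∀ r ∈ Set.Ioc (0 : ℝ) a, r ∉ rSet α Kbar v) {μ : Kbar}
    (hμ : (B.charpoly.map (algebraMap K Kbar)).IsRoot μ) : v μ < a⁻¹ := by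
  have hB : Module.End.HasEigenvalue (B.baseChange Kbar) μ := by
    rwa [Module.End.hasEigenvalue_iff_isRoot_charpoly, LinearMap.charpoly_baseChange]
  have h : Function.LeftInverse (α.baseChange Kbar) (B.baseChange Kbar) := fun x => by
    rw [← LinearMap.comp_apply, ← LinearMap.baseChange_comp, show α ∘ₗ B = LinearMap.id from
      LinearMap.ext hαB, LinearMap.baseChange_id, LinearMap.id_apply]
  have hvμ : 0 < v μ := v.pos (hB.ne_zero_of_leftInverse h)
  have hmem : v μ⁻¹ ∈ rSet α Kbar v := ⟨μ⁻¹, hB.inv_of_leftInverse h, rfl⟩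
  rw [map_inv₀] at hmem
  exact (lt_inv_comm₀ ha hvμ).1 (lt_of_not_ge fun hle => hR _ ⟨inv_pos.2 hvμ, hle⟩ hmem)

section AdaptedNorm

variable {R E : Type*} [Semiring R] [SeminormedAddCommGroup E] [Module R E]

noncomputable def adaptedNorm (B : E →ₗ[R] E) (w : ℝ) (x : E) : ℝ :=
  ⨆ m : ℕ, ‖(B ^ m) x‖ / w ^ m

variable {B : E →ₗ[R] E} {w C : ℝ}

theorem norm_pow_apply_div_pow_le (hw : 0 < w) (hB : ∀ m x, ‖(B ^ m) x‖ ≤ C * w ^ m * ‖x‖)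
    (m : ℕ) (x : E) : ‖(B ^ m) x‖ / w ^ m ≤ C * ‖x‖ := by
  rw [div_le_iff₀ (pow_pos hw m), mul_right_comm]
  exact hB m x

theorem bddAbove_adaptedNorm (hw : 0 < w) (hB : ∀ m x, ‖(B ^ m) x‖ ≤ C * w ^ m * ‖x‖)
    (x : E) : BddAbove (Set.range fun m : ℕ => ‖(B ^ m) x‖ / w ^ m) :=
  ⟨C * ‖x‖, by rintro _ ⟨m, rfl⟩; exact norm_pow_apply_div_pow_le hw hB m x⟩

theorem adaptedNorm_le (hw : 0 < w) (hB : ∀ m x, ‖(B ^ m) x‖ ≤ C * w ^ m * ‖x‖) (x : E) :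
    adaptedNorm B w x ≤ C * ‖x‖ :=
  ciSup_le fun m => norm_pow_apply_div_pow_le hw hB m x

theorem norm_le_adaptedNorm (hw : 0 < w) (hB : ∀ m x, ‖(B ^ m) x‖ ≤ C * w ^ m * ‖x‖)
    (x : E) : ‖x‖ ≤ adaptedNorm B w x := by
  simpa [adaptedNorm] using le_ciSup (bddAbove_adaptedNorm hw hB x) 0

theorem adaptedNorm_add_le (hw : 0 < w) (hB : ∀ m x, ‖(B ^ m) x‖ ≤ C * w ^ m * ‖x‖)
    (x y : E) : adaptedNorm B w (x + y) ≤ adaptedNorm B w x + adaptedNorm B w y := by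
  refine ciSup_le fun m => ?_
  calc ‖(B ^ m) (x + y)‖ / w ^ m ≤ ‖(B ^ m) x‖ / w ^ m + ‖(B ^ m) y‖ / w ^ m := by
        rw [map_add, ← add_div]; gcongr; exact norm_add_le _ _
    _ ≤ _ := add_le_add (le_ciSup (bddAbove_adaptedNorm hw hB x) m)
        (le_ciSup (bddAbove_adaptedNorm hw hB y) m)

theorem inv_mul_adaptedNorm_le (hw : 0 < w) (hB : ∀ m x, ‖(B ^ m) x‖ ≤ C * w ^ m * ‖x‖)
    {α : E →ₗ[R] E} (hBα : Function.LeftInverse B α) (y : E) :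
    w⁻¹ * adaptedNorm B w y ≤ adaptedNorm B w (α y) := by
  rw [adaptedNorm, Real.mul_iSup_of_nonneg (inv_nonneg.2 hw.le)]
  refine ciSup_le fun m => ?_
  calc w⁻¹ * (‖(B ^ m) y‖ / w ^ m) = ‖(B ^ (m + 1)) (α y)‖ / w ^ (m + 1) := by
        rw [pow_succ, Module.End.mul_apply, hBα y, pow_succ]; ring
    _ ≤ adaptedNorm B w (α y) := le_ciSup (bddAbove_adaptedNorm hw hB (α y)) (m + 1)

end AdaptedNorm

theorem HasFDerivAt.eventually_mul_le_of_expanding {K E : Type*} [NontriviallyNormedField K]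
    [NormedAddCommGroup E] [NormedSpace K E] {f : E → E} {α : E →L[K] E} {p : E}
    (hf : HasFDerivAt f α p) (hfp : f p = p) {N : E → ℝ} {C s t : ℝ} (hst : s < t)
    (hC : 0 ≤ C) (hN_add : ∀ x y, N (x + y) ≤ N x + N y) (hN_le : ∀ x, N x ≤ C * ‖x‖)
    (hle_N : ∀ x, ‖x‖ ≤ N x) (hα : ∀ y, t * N y ≤ N (α y)) :
    ∀ᶠ x in 𝓝 p, s * N (x - p) ≤ N (f x - p) := by
  have hε : 0 < (t - s) / (C + 1) := div_pos (sub_pos.2 hst) (by linarith)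
  filter_upwards [hf.isLittleO.def hε] with x hx
  rw [hfp] at hx
  have hrem : N (-(f x - p - α (x - p))) ≤ (t - s) * N (x - p) :=
    calc N (-(f x - p - α (x - p))) ≤ C * ‖f x - p - α (x - p)‖ := by
          rw [← norm_neg]; exact hN_le _
      _ ≤ (C + 1) * ((t - s) / (C + 1) * ‖x - p‖) :=
          mul_le_mul (by linarith) hx (norm_nonneg _) (by linarith)
      _ = (t - s) * ‖x - p‖ := by field_simp
      _ ≤ (t - s) * N (x - p) := mul_le_mul_of_nonneg_left (hle_N _) (sub_pos.2 hst).le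
  have hsplit := hN_add (f x - p) (-(f x - p - α (x - p)))
  rw [show f x - p + -(f x - p - α (x - p)) = α (x - p) by abel] at hsplit
  linarith [hα (x - p)]

theorem nonpos_of_tendsto_inv_pow_mul {u : ℕ → ℝ} {a : ℝ} {n₀ : ℕ} (ha : 0 < a)
    (hu : ∀ n ≥ n₀, a * u n ≤ u (n + 1))
    (hlim : Tendsto (fun n => (a ^ n)⁻¹ * u n) atTop (𝓝 0)) : u n₀ ≤ 0 := by
  have hmono : Monotone fun k => (a ^ (k + n₀))⁻¹ * u (k + n₀) := by
    refine monotone_nat_of_le_succ fun k => ?_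
    have hstep : u (k + n₀) ≤ a⁻¹ * u (k + n₀ + 1) := by
      rw [le_inv_mul_iff₀ ha]; exact hu _ (Nat.le_add_left _ _)
    calc (a ^ (k + n₀))⁻¹ * u (k + n₀) ≤ (a ^ (k + n₀))⁻¹ * (a⁻¹ * u (k + n₀ + 1)) := by gcongr
      _ = (a ^ (k + 1 + n₀))⁻¹ * u (k + 1 + n₀) := by
        rw [show k + 1 + n₀ = k + n₀ + 1 by omega, pow_succ, mul_inv, mul_assoc]
  have h := hmono.ge_of_tendsto ((tendsto_add_atTop_iff_nat n₀).2 hlim) 0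
  exact nonpos_of_mul_nonpos_right (by simpa using h) (inv_pos.2 (pow_pos ha n₀))

theorem wStable_eq_singleton_of_eventually_expanding {E : Type*} [NormedAddCommGroup E]
    {f : E → E} {p : E} {a C : ℝ} {N : E → ℝ} (hinj : Function.Injective f) (hfp : f p = p)
    (ha : 0 < a) (hN_le : ∀ x, N x ≤ C * ‖x‖) (hle_N : ∀ x, ‖x‖ ≤ N x)
    (hexp : ∀ᶠ x in 𝓝 p, a * N (x - p) ≤ N (f x - p)) : WStable f p a = {p} := by
  refine Set.eq_singleton_iff_unique_mem.2
    ⟨by simp [WStable, Function.iterate_fixed hfp], fun x ⟨hconv, hrate⟩ => ?_⟩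
  obtain ⟨n₀, hn₀⟩ := eventually_atTop.1 (hconv.eventually hexp)
  have hlim : Tendsto (fun n => (a ^ n)⁻¹ * N (f^[n] x - p)) atTop (𝓝 0) := by
    refine squeeze_zero (fun n => ?_) (fun n => ?_) (by simpa using hrate.const_mul C)
    · exact mul_nonneg (by positivity) ((norm_nonneg _).trans (hle_N _))
    · rw [mul_left_comm]; gcongr; exact hN_le _
  have h0 : N (f^[n₀] x - p) ≤ 0 := nonpos_of_tendsto_inv_pow_mul ha
    (fun n hn => by simpa only [Function.iterate_succ_apply'] using hn₀ n hn) hlim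
  have hx : f^[n₀] x = f^[n₀] p := by
    rw [Function.iterate_fixed hfp]
    exact sub_eq_zero.1 (norm_le_zero_iff.1 ((hle_N _).trans h0))
  exact hinj.iterate n₀ hx

theorem wStable_eq_singleton_of_Ioc_disjoint_general
    {K : Type*} [NontriviallyNormedField K] [IsUltrametricDist K] [CompleteSpace K]
    {E : Type*} [NormedAddCommGroup E] [NormedSpace K E] [FiniteDimensional K E]
    {f g : E → E} (hg : AnalyticOnNhd K g Set.univ)
    (hgf : Function.LeftInverse g f) (hfg : Function.RightInverse g f)
    {p : E} (hfp : f p = p)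
    (α : E →L[K] E) (hα : HasFDerivAt f α p)
    {Kbar : Type*} [Field Kbar] [Algebra K Kbar] [IsAlgClosure K Kbar]
    (v : AbsoluteValue Kbar ℝ) (hv : ∀ x : K, v (algebraMap K Kbar x) = ‖x‖)
    {a : ℝ} (ha : 0 < a)
    (hR : ∀ r ∈ Set.Ioc (0 : ℝ) a, r ∉ rSet (α : E →ₗ[K] E) Kbar v) :
    WStable f p a = {p} := by
  have hB : HasFDerivAt g (fderiv K g p) (f p) := by
    rw [hfp]; exact (hg p trivial).differentiableAt.hasFDerivAt
  set B := fderiv K g p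
  have hBα : Function.LeftInverse B α := hgf.leftInverse_of_hasFDerivAt hα hB
  have hαB : Function.LeftInverse α B := hfg.leftInverse_of_hasFDerivAt hB (by rwa [hgf p])
  have : IsAlgClosed Kbar := IsAlgClosure.isAlgClosed K
  set roots := ((B : E →ₗ[K] E).charpoly.map (algebraMap K Kbar)).roots
  have hroots : ∀ μ ∈ {μ | μ ∈ roots}, ∀ᶠ w in 𝓝[<] a⁻¹, v μ ≤ w := fun μ hμ =>
    Filter.mem_of_superset (Ioo_mem_nhdsLT (abv_lt_inv_of_isRoot_charpoly hαB ha hR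
      (isRoot_of_mem_roots hμ))) fun _ hw => hw.1.le
  obtain ⟨w, hw, hw0, hwa⟩ :=
    ((roots.finite_toSet.eventually_all.2 hroots).and (Ioo_mem_nhdsLT (inv_pos.2 ha))).exists
  obtain ⟨C, hC0, hC⟩ :=
    (B : E →ₗ[K] E).exists_norm_pow_apply_le_of_roots_charpoly hv hw0 hw
  refine wStable_eq_singleton_of_eventually_expanding hgf.injective hfp ha
    (adaptedNorm_le hw0 hC) (norm_le_adaptedNorm hw0 hC) ?_
  exact hα.eventually_mul_le_of_expanding hfp ((lt_inv_comm₀ ha hw0).2 hwa) hC0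
    (adaptedNorm_add_le hw0 hC) (adaptedNorm_le hw0 hC) (norm_le_adaptedNorm hw0 hC)
    (inv_mul_adaptedNorm_le hw0 hC hBα)

/-- If `a ∈ (0,1]` and `(0,a] ∩ R(α) = ∅`, then the `a`-stable set of
the analytic diffeomorphism `f` around its fixed point `p` is `{p}`. -/
theorem wStable_eq_singleton_of_Ioc_disjoint
    {K : Type*} [NontriviallyNormedField K] [IsUltrametricDist K] [CompleteSpace K]
    {E : Type*} [NormedAddCommGroup E] [NormedSpace K E] [FiniteDimensional K E]
    {f g : E → E} (hf : AnalyticOnNhd K f Set.univ) (hg : AnalyticOnNhd K g Set.univ)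
    (hgf : Function.LeftInverse g f) (hfg : Function.RightInverse g f)
    {p : E} (hfp : f p = p)
    (α : E →L[K] E) (hα : HasFDerivAt f α p)
    {Kbar : Type*} [Field Kbar] [Algebra K Kbar] [IsAlgClosure K Kbar]
    (v : AbsoluteValue Kbar ℝ) (hv : ∀ x : K, v (algebraMap K Kbar x) = ‖x‖)
    {a : ℝ} (ha : 0 < a) (ha1 : a ≤ 1)
    (hR : ∀ r ∈ Set.Ioc (0 : ℝ) a, r ∉ rSet (α : E →ₗ[K] E) Kbar v) :
    WStable f p a = {p} :=
  wStable_eq_singleton_of_Ioc_disjoint_general hg hgf hfg hfp α hα v hv ha hR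
end

section
/- Let E be an ultrametric Banach space over a complete ultrametric field K, U ⊆ E open, f : U → E analytic, and x ∈ U such that f'(x) is a bicontinuous linear automorphism of E. Then there exists ε > 0 such that the open ball B_ε(x) is contained in U and ‖f(z) − f(y)‖ = ‖f'(x)(z − y)‖ for all y, z ∈ B_ε(x). -/
/-!
An analytic map is strictly differentiable, so near `(x, x)` the remainder
`f z - f y - α (z - y)` is small compared with `z - y`, hence (as `α` is invertible) strictly
smaller than `α (z - y)`. In an ultrametric space a perturbation strictly smaller than a vector
does not change its norm.
-/

open Filter Topology

theorem IsUltrametricDist.norm_eq_of_norm_sub_le_mul_norm {G : Type*} [SeminormedAddCommGroup G]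
    [IsUltrametricDist G] {a b : G} {c : ℝ} (hc : c < 1) (h : ‖a - b‖ ≤ c * ‖b‖) :
    ‖a‖ = ‖b‖ := by
  rcases (norm_nonneg b).eq_or_lt with hb | hb
  · have hab : ‖a - b‖ ≤ 0 := by rwa [← hb, mul_zero] at h
    refine le_antisymm ?_ (hb ▸ norm_nonneg a)
    calc ‖a‖ = ‖(a - b) + b‖ := by rw [sub_add_cancel]
      _ ≤ ‖a - b‖ + ‖b‖ := norm_add_le _ _
      _ ≤ ‖b‖ := by linarith
  · have hlt : ‖a - b‖ < ‖b‖ := h.trans_lt (by nlinarith)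
    have := IsUltrametricDist.norm_add_eq_max_of_norm_ne_norm hlt.ne
    rwa [sub_add_cancel, max_eq_right hlt.le] at this

theorem HasStrictFDerivAt.eventually_norm_sub_eq {K : Type*} [NontriviallyNormedField K]
    {E F : Type*} [NormedAddCommGroup E] [NormedSpace K E] [NormedAddCommGroup F]
    [NormedSpace K F] [IsUltrametricDist F] {f : E → F} {x : E} {α : E ≃L[K] F}
    (hf : HasStrictFDerivAt f (α : E →L[K] F) x) :
    ∀ᶠ p in 𝓝 (x, x), ‖f p.1 - f p.2‖ = ‖α (p.1 - p.2)‖ := by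
  have hsmall := (hf.isLittleO.trans_isBigO (α.isBigO_comp_rev _ _)).def
    (show (0 : ℝ) < 1 / 2 by norm_num)
  filter_upwards [hsmall] with p hp
  exact IsUltrametricDist.norm_eq_of_norm_sub_le_mul_norm (by norm_num) hp

theorem exists_ball_norm_image_sub_eq_general
    {K : Type*} [NontriviallyNormedField K]
    {E : Type*} [NormedAddCommGroup E] [NormedSpace K E] [IsUltrametricDist E]
    {U : Set E} (hU : IsOpen U) {f : E → E} (hf : AnalyticOnNhd K f U)
    {x : E} (hx : x ∈ U)
    (α : E ≃L[K] E) (hα : HasFDerivAt f (α : E →L[K] E) x) :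
    ∃ ε > 0, Metric.ball x ε ⊆ U ∧
      ∀ y ∈ Metric.ball x ε, ∀ z ∈ Metric.ball x ε,
        ‖f z - f y‖ = ‖α (z - y)‖ := by
  have hstrict : HasStrictFDerivAt f (α : E →L[K] E) x :=
    hα.fderiv ▸ (hf x hx).hasStrictFDerivAt
  have hnear : ∀ᶠ p in 𝓝 (x, x), p.1 ∈ U ∧ ‖f p.1 - f p.2‖ = ‖α (p.1 - p.2)‖ :=
    ((continuous_fst.tendsto (x, x)).eventually (hU.eventually_mem hx)).and
      hstrict.eventually_norm_sub_eq
  obtain ⟨ε, hε, hball⟩ := Metric.eventually_nhds_iff_ball.1 hnear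
  have hmem : ∀ {y z}, y ∈ Metric.ball x ε → z ∈ Metric.ball x ε →
      (z, y) ∈ Metric.ball (x, x) ε :=
    fun hy hz => ball_prod_same x x ε ▸ Set.mk_mem_prod hz hy
  exact ⟨ε, hε, fun y hy => (hball _ (hmem hy hy)).1,
    fun y hy z hz => (hball _ (hmem hy hz)).2⟩

/-- An analytic map on an open subset of an ultrametric Banach space
whose differential at `x` is a bicontinuous automorphism is, on a small ball around `x`,
an exact "isometry up to `f'(x)`": `‖f z − f y‖ = ‖f'(x)(z − y)‖`. -/
theorem exists_ball_norm_image_sub_eq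
    {K : Type*} [NontriviallyNormedField K] [IsUltrametricDist K] [CompleteSpace K]
    {E : Type*} [NormedAddCommGroup E] [NormedSpace K E] [IsUltrametricDist E]
    [CompleteSpace E]
    {U : Set E} (hU : IsOpen U) {f : E → E} (hf : AnalyticOnNhd K f U)
    {x : E} (hx : x ∈ U)
    (α : E ≃L[K] E) (hα : HasFDerivAt f (α : E →L[K] E) x) :
    ∃ ε > 0, Metric.ball x ε ⊆ U ∧
      ∀ y ∈ Metric.ball x ε, ∀ z ∈ Metric.ball x ε,
        ‖f z - f y‖ = ‖α (z - y)‖ :=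
  exists_ball_norm_image_sub_eq_general hU hf hx α hα
end

section
/- Let (K,|·|) be a complete ultrametric field, E a finite-dimensional K-vector space, α : E → E a K-linear map, and a ∈ (0,∞). Suppose (E_s, E_u, ‖·‖) and (F_s, F_u, ‖·‖') both witness that α is a-hyperbolic, i.e. E_s, E_u (respectively F_s, F_u) are α-invariant subspaces with E = E_s ⊕ E_u (respectively E = F_s ⊕ F_u), α restricts to a bijection of E_u (respectively of F_u), and ‖·‖ (respectively ‖·‖') is an ultrametric norm on E defining its topology with ‖x+y‖ = max{‖x‖,‖y‖} for x ∈ E_s, y ∈ E_u, operator norm of α|_{E_s} < a and operator norm of (α|_{E_u})⁻¹ < 1/a (and the analogous conditions for F_s, F_u, ‖·‖'). Then E_s = F_s and E_u = F_u. -/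
/-- `(Es, Eu, N)` witnesses that `α` is `a`-hyperbolic: `Es`, `Eu` are `α`-invariant with
`E = Es ⊕ Eu`, `α` restricts to a bijection of `Eu`, and `N` is an ultrametric norm
defining the topology of `E`, compatible with the splitting, for which the operator norm
of `α` on `Es` is `< a` and the operator norm of the inverse of `α` on `Eu` is `< 1/a`. -/
def HyperbolicWitness {K : Type*} [NormedField K]
    {E : Type*} [NormedAddCommGroup E] [NormedSpace K E]
    (α : E →ₗ[K] E) (a : ℝ) (Es Eu : Submodule K E) (N : E → ℝ) : Prop :=
  (∀ x ∈ Es, α x ∈ Es) ∧ (∀ x ∈ Eu, α x ∈ Eu) ∧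
  IsCompl Es Eu ∧
  Set.BijOn ⇑α (Eu : Set E) (Eu : Set E) ∧
  IsUltraNorm K N ∧ DefinesTopology N ∧
  (∀ x ∈ Es, ∀ y ∈ Eu, N (x + y) = max (N x) (N y)) ∧
  (∃ b, b < a ∧ ∀ x ∈ Es, N (α x) ≤ b * N x) ∧
  (∃ b, a < b ∧ ∀ y ∈ Eu, b * N y ≤ N (α y))

/-!
The splitting is determined by growth rates alone, which do not depend on the witnessing norm
since every such norm is equivalent to the ambient one: `Es` consists of the vectors whose
forward orbit is `O(aⁿ)`, and `Eu` of the vectors that have preimages under `αⁿ` of size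
`O(a⁻ⁿ)`. For the nontrivial inclusions one projects along the splitting. The projection
commutes with `α` and, because the norm of `s + u` is the maximum of the norms of `s` and `u`,
it does not increase the norm; so a nonzero unstable (resp. stable) component would grow
(resp. shrink) at a rate strictly beyond `aⁿ`, which the growth bound rules out.
-/

open Filter Asymptotics Set

lemma nonpos_of_pow_mul_le_mul_pow {v C p q : ℝ} (hp : 0 ≤ p) (hpq : p < q)
    (h : ∀ᶠ n in atTop, q ^ n * v ≤ C * p ^ n) : v ≤ 0 := by
  have hq : 0 < q := hp.trans_lt hpq
  have hlim : Tendsto (fun n : ℕ => C * (p / q) ^ n) atTop (nhds 0) := by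
    simpa using (tendsto_pow_atTop_nhds_zero_of_lt_one (div_nonneg hp hq.le)
      ((div_lt_one hq).2 hpq)).const_mul C
  refine ge_of_tendsto hlim (h.mono fun n hn => ?_)
  rwa [div_pow, ← mul_div_assoc, le_div_iff₀ (pow_pos hq n), mul_comm]

namespace Set.MapsTo

variable {X : Type*} {f : X → X} {s : Set X} {N : X → ℝ} {b : ℝ}

lemma iterate_le_pow_mul (hf : MapsTo f s s) (hb : 0 ≤ b) (h : ∀ x ∈ s, N (f x) ≤ b * N x)
    (n : ℕ) {x : X} (hx : x ∈ s) : N (f^[n] x) ≤ b ^ n * N x := by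
  induction n generalizing x with
  | zero => simp
  | succ n ih =>
    calc N (f^[n + 1] x) = N (f^[n] (f x)) := by rw [Function.iterate_succ_apply]
      _ ≤ b ^ n * N (f x) := ih (hf hx)
      _ ≤ b ^ n * (b * N x) := by gcongr; exact h x hx
      _ = b ^ (n + 1) * N x := by ring

lemma pow_mul_le_iterate (hf : MapsTo f s s) (hb : 0 ≤ b) (h : ∀ x ∈ s, b * N x ≤ N (f x))
    (n : ℕ) {x : X} (hx : x ∈ s) : b ^ n * N x ≤ N (f^[n] x) := by
  induction n generalizing x with
  | zero => simp
  | succ n ih =>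
    calc b ^ (n + 1) * N x = b ^ n * (b * N x) := by ring
      _ ≤ b ^ n * N (f x) := by gcongr; exact h x hx
      _ ≤ N (f^[n] (f x)) := ih (hf hx)
      _ = N (f^[n + 1] x) := by rw [Function.iterate_succ_apply]

end Set.MapsTo

namespace Submodule

variable {R M : Type*} [Ring R] [AddCommGroup M] [Module R M] {p q : Submodule R M}

lemma commute_projection (hpq : IsCompl p q) {f : M →ₗ[R] M} (hp : ∀ x ∈ p, f x ∈ p)
    (hq : ∀ x ∈ q, f x ∈ q) : Function.Commute (p.projection q hpq) f := by
  have hcomm : Commute (p.projection q hpq) f :=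
    LinearMap.IsIdempotentElem.commute_iff (isIdempotentElem_projection hpq) |>.2
      ⟨by simpa [Module.End.mem_invtSubmodule_iff_forall_mem_of_mem] using hp,
        by simpa [Module.End.mem_invtSubmodule_iff_forall_mem_of_mem] using hq⟩
  exact fun x => LinearMap.congr_fun hcomm.eq x

lemma max_apply_projection_eq {N : M → ℝ} (hpq : IsCompl p q)
    (hN : ∀ x ∈ p, ∀ y ∈ q, N (x + y) = max (N x) (N y)) (x : M) :
    max (N (p.projection q hpq x)) (N (q.projection p hpq.symm x)) = N x := by
  rw [← hN _ (projection_apply_mem _ _) _ (projection_apply_mem _ _),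
    projection_add_projection_eq_self]

end Submodule

lemma DefinesTopology.isBigO_iff {ι E F : Type*} [NormedAddCommGroup E] [Norm F] {N : E → ℝ}
    (hN : DefinesTopology N) {l : Filter ι} {u : ι → E} {g : ι → F} :
    u =O[l] g ↔ ∃ C, ∀ᶠ i in l, N (u i) ≤ C * ‖g i‖ := by
  obtain ⟨c, hc, C', hC', hcC⟩ := hN
  rw [Asymptotics.isBigO_iff]
  constructor
  · rintro ⟨C, hC⟩
    refine ⟨C' * C, hC.mono fun i hi => ?_⟩
    calc N (u i) ≤ C' * ‖u i‖ := (hcC _).2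
      _ ≤ C' * (C * ‖g i‖) := by gcongr
      _ = C' * C * ‖g i‖ := by ring
  · rintro ⟨C, hC⟩
    refine ⟨c⁻¹ * C, hC.mono fun i hi => ?_⟩
    rw [mul_assoc, le_inv_mul_iff₀ hc]
    exact (hcC _).1.trans hi

namespace HyperbolicWitness

variable {K : Type*} [NormedField K] {E : Type*} [NormedAddCommGroup E] [NormedSpace K E]
  {α : E →ₗ[K] E} {a : ℝ} {Es Eu : Submodule K E} {N : E → ℝ}

lemma exists_contraction (hw : HyperbolicWitness α a Es Eu N) (ha : 0 < a) :
    ∃ b, 0 ≤ b ∧ b < a ∧ ∀ n, ∀ x ∈ Es, N (α^[n] x) ≤ b ^ n * N x := by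
  obtain ⟨hEs, -, -, -, ⟨hN0, -⟩, -, -, ⟨b, hba, hb⟩, -⟩ := hw
  refine ⟨max b 0, le_max_right _ _, max_lt hba ha, fun n x hx => ?_⟩
  refine MapsTo.iterate_le_pow_mul hEs (le_max_right _ _) (fun y hy => ?_) n hx
  exact (hb y hy).trans (by gcongr; exacts [hN0 y, le_max_left _ _])

lemma exists_expansion (hw : HyperbolicWitness α a Es Eu N) (ha : 0 < a) :
    ∃ b, a < b ∧ ∀ n, ∀ y ∈ Eu, b ^ n * N y ≤ N (α^[n] y) := by
  obtain ⟨-, hEu, -, -, -, -, -, -, ⟨b, hab, hb⟩⟩ := hw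
  exact ⟨b, hab, fun n y hy => MapsTo.pow_mul_le_iterate hEu (ha.trans hab).le hb n hy⟩

lemma mem_stable_iff (hw : HyperbolicWitness α a Es Eu N) (ha : 0 < a) {x : E} :
    x ∈ Es ↔ (fun n => α^[n] x) =O[atTop] (a ^ ·) := by
  obtain ⟨b, hb0, hba, hcontr⟩ := hw.exists_contraction ha
  obtain ⟨b', hab', hexp⟩ := hw.exists_expansion ha
  obtain ⟨hEs, hEu, hcompl, -, ⟨hN0, hNzero, -⟩, hN, hmax, -⟩ := hw
  rw [hN.isBigO_iff]
  simp only [norm_pow, Real.norm_of_nonneg ha.le]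
  constructor
  · intro hx
    refine ⟨N x, Eventually.of_forall fun n => ?_⟩
    calc N (α^[n] x) ≤ b ^ n * N x := hcontr n x hx
      _ ≤ N x * a ^ n := by rw [mul_comm]; gcongr; exact hN0 x
  · rintro ⟨C, hC⟩
    set ρ := Eu.projection Es hcompl.symm
    have hρ : Function.Commute ρ α := Submodule.commute_projection _ hEu hEs
    suffices N (ρ x) ≤ 0 by
      rw [← Submodule.projection_apply_eq_zero_iff hcompl.symm]
      exact (hNzero _).1 (le_antisymm this (hN0 _))
    refine nonpos_of_pow_mul_le_mul_pow (C := C) ha.le hab' (hC.mono fun n hn => ?_)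
    calc b' ^ n * N (ρ x) ≤ N (α^[n] (ρ x)) := hexp n _ (Submodule.projection_apply_mem _ _)
      _ = N (ρ (α^[n] x)) := by rw [(hρ.iterate_right n).eq]
      _ ≤ N (α^[n] x) := by
        rw [← Submodule.max_apply_projection_eq hcompl hmax (α^[n] x)]
        exact le_max_right _ _
      _ ≤ C * a ^ n := hn

lemma mem_unstable_iff (hw : HyperbolicWitness α a Es Eu N) (ha : 0 < a) {x : E} :
    x ∈ Eu ↔ ∃ f : ℕ → E, (∀ n, α^[n] (f n) = x) ∧ f =O[atTop] (a⁻¹ ^ ·) := by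
  obtain ⟨b, hb0, hba, hcontr⟩ := hw.exists_contraction ha
  obtain ⟨b', hab', hexp⟩ := hw.exists_expansion ha
  obtain ⟨hEs, hEu, hcompl, hbij, ⟨hN0, hNzero, -⟩, hN, hmax, -⟩ := hw
  simp only [hN.isBigO_iff, norm_pow, norm_inv, Real.norm_of_nonneg ha.le]
  constructor
  · intro hx
    choose f hfEu hfx using fun n => hbij.surjOn.iterate n hx
    refine ⟨f, hfx, N x, Eventually.of_forall fun n => ?_⟩
    calc N (f n) = (a ^ n)⁻¹ * (a ^ n * N (f n)) := by field_simp
      _ ≤ (a ^ n)⁻¹ * (b' ^ n * N (f n)) := by gcongr; exact hN0 _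
      _ ≤ (a ^ n)⁻¹ * N x := by gcongr; exact (hexp n _ (hfEu n)).trans_eq (congrArg N (hfx n))
      _ = N x * a⁻¹ ^ n := by rw [inv_pow, mul_comm]
  · rintro ⟨f, hfx, C, hC⟩
    set π := Es.projection Eu hcompl
    have hπ : Function.Commute π α := Submodule.commute_projection _ hEs hEu
    suffices N (π x) ≤ 0 by
      rw [← Submodule.projection_apply_eq_zero_iff hcompl]
      exact (hNzero _).1 (le_antisymm this (hN0 _))
    refine nonpos_of_pow_mul_le_mul_pow (C := C) hb0 hba (hC.mono fun n hn => ?_)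
    have hπn : π x = α^[n] (π (f n)) := by rw [← hfx n, (hπ.iterate_right n).eq]
    calc a ^ n * N (π x) ≤ a ^ n * (b ^ n * N (π (f n))) := by
          gcongr; rw [hπn]; exact hcontr n _ (Submodule.projection_apply_mem _ _)
      _ ≤ a ^ n * (b ^ n * N (f n)) := by
          gcongr
          rw [← Submodule.max_apply_projection_eq hcompl hmax (f n)]
          exact le_max_left _ _
      _ ≤ a ^ n * (b ^ n * (C * a⁻¹ ^ n)) := by gcongr
      _ = C * b ^ n := by rw [inv_pow]; field_simp

end HyperbolicWitness

theorem hyperbolicWitness_unique_general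
    {K : Type*} [NontriviallyNormedField K]
    {E : Type*} [NormedAddCommGroup E] [NormedSpace K E]
    (α : E →ₗ[K] E) {a : ℝ} (ha : 0 < a)
    {Es Eu Fs Fu : Submodule K E} {N N' : E → ℝ}
    (h : HyperbolicWitness α a Es Eu N) (h' : HyperbolicWitness α a Fs Fu N') :
    Es = Fs ∧ Eu = Fu := by
  refine ⟨Submodule.ext fun x => ?_, Submodule.ext fun x => ?_⟩
  · rw [h.mem_stable_iff ha, h'.mem_stable_iff ha]
  · rw [h.mem_unstable_iff ha, h'.mem_unstable_iff ha]

/-- In finite dimension, the stable and unstable subspaces witnessing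
`a`-hyperbolicity of `α` are uniquely determined. -/
theorem hyperbolicWitness_unique
    {K : Type*} [NontriviallyNormedField K] [IsUltrametricDist K] [CompleteSpace K]
    {E : Type*} [NormedAddCommGroup E] [NormedSpace K E] [FiniteDimensional K E]
    (α : E →ₗ[K] E) {a : ℝ} (ha : 0 < a)
    {Es Eu Fs Fu : Submodule K E} {N N' : E → ℝ}
    (h : HyperbolicWitness α a Es Eu N) (h' : HyperbolicWitness α a Fs Fu N') :
    Es = Fs ∧ Eu = Fu :=
  hyperbolicWitness_unique_general α ha h h'
end
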